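/- arXiv:1411.1477 — 8 statements merged into one kernel-verified Lean document; each statement's English description precedes it below -/
import Mathlib

section
/- For all natural numbers n, the sum over integers k of binom(2n, n+k) * |k| equals n * binom(2n, n). -/
/-- Binomial coefficient `n.choose k` extended to an integer lower index,
vanishing when `k < 0` (and, as usual, when `k > n`). -/
def ichoose (n : ℕ) (k : ℤ) : ℤ := if 0 ≤ k then (n.choose k.toNat : ℤ) else 0

lemma key (n k : ℕ) (hk : k < n) :
    ((n : ℤ) + k + 1) * (2 * n).choose (n + k + 1) = ((n : ℤ) - k) * (2 * n).choose (n + k) := by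
  have h := Nat.choose_succ_right_eq (2 * n) (n + k)
  have h2 : 2 * n - (n + k) = n - k := by omega
  rw [h2] at h
  have := congrArg (Nat.cast (R := ℤ)) h
  push_cast [Nat.cast_sub hk.le] at this
  linarith

lemma S2 (n : ℕ) :
    2 * ∑ k ∈ Finset.range (n + 1), (k : ℤ) * (2 * n).choose (n + k)
      = n * (2 * n).choose n := by
  set g : ℕ → ℤ := fun k => ((2 * n).choose (n + k) : ℤ) with hg
  have hT : ∑ k ∈ Finset.range (n + 1), ((n : ℤ) + k) * g k
      = n * g 0 + ∑ k ∈ Finset.range (n + 1), ((n : ℤ) - k) * g k := by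
    rw [Finset.sum_range_succ' (fun k => ((n : ℤ) + k) * g k)]
    have e1 : ∀ k ∈ Finset.range n, ((n : ℤ) + ((k:ℕ) + 1 : ℕ)) * g (k + 1) = ((n : ℤ) - k) * g k := by
      intro k hk
      simp only [Finset.mem_range] at hk
      have := key n k hk
      simp only [hg, show n + (k + 1) = n + k + 1 from rfl]
      push_cast
      push_cast at this
      linarith
    rw [Finset.sum_congr rfl e1]
    rw [Finset.sum_range_succ (fun k => ((n : ℤ) - k) * g k)]
    simp
    ring
  have hg0 : g 0 = (2 * n).choose n := by simp [hg]
  have expand : ∀ k : ℕ, ((n : ℤ) + k) * g k - ((n : ℤ) - k) * g k = 2 * ((k : ℤ) * g k) := by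
    intro k; ring
  calc 2 * ∑ k ∈ Finset.range (n + 1), (k : ℤ) * g k
      = ∑ k ∈ Finset.range (n + 1), (((n : ℤ) + k) * g k - ((n : ℤ) - k) * g k) := by
        rw [Finset.mul_sum]; exact Finset.sum_congr rfl fun k _ => (expand k).symm
    _ = (∑ k ∈ Finset.range (n + 1), ((n : ℤ) + k) * g k)
        - ∑ k ∈ Finset.range (n + 1), ((n : ℤ) - k) * g k := by rw [Finset.sum_sub_distrib]
    _ = n * g 0 := by rw [hT]; ring
    _ = n * (2 * n).choose n := by rw [hg0]

theorem stmt0 (n : ℕ) :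
    ∑ᶠ k : ℤ, ichoose (2 * n) (n + k) * |k| = n * (2 * n).choose n := by
  have hsupp : Function.support (fun k : ℤ => ichoose (2 * n) (n + k) * |k|)
      ⊆ (Finset.Icc (-(n : ℤ)) n : Finset ℤ) := by
    intro k hk
    simp only [Function.mem_support, ne_eq] at hk
    simp only [Finset.coe_Icc, Set.mem_Icc]
    by_contra hcon
    push_neg at hcon
    apply hk
    unfold ichoose
    by_cases h0 : (0 : ℤ) ≤ n + k
    · rw [if_pos h0]
      have hgt : 2 * n < ((n : ℤ) + k).toNat := by omega
      rw [Nat.choose_eq_zero_of_lt hgt]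
      simp
    · rw [if_neg h0]; simp
  rw [finsum_eq_finset_sum_of_support_subset _ hsupp]
  have hbij : ∑ k ∈ Finset.Icc (-(n : ℤ)) n, ichoose (2 * n) (n + k) * |k|
      = ∑ j ∈ Finset.range (2 * n + 1), ((2 * n).choose j : ℤ) * |(j : ℤ) - n| := by
    apply Finset.sum_nbij' (fun k => ((n : ℤ) + k).toNat) (fun j => (j : ℤ) - n)
    · intro a ha; simp only [Finset.mem_Icc] at ha; simp only [Finset.mem_range]; omega
    · intro a ha; simp only [Finset.mem_range] at ha; simp only [Finset.mem_Icc]; omega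
    · intro a ha; simp only [Finset.mem_Icc] at ha; omega
    · intro a ha; simp only [Finset.mem_range] at ha; omega
    · intro a ha
      simp only [Finset.mem_Icc] at ha
      unfold ichoose
      rw [if_pos (by omega)]
      have h4 : ((((n : ℤ) + a).toNat : ℤ)) = (n : ℤ) + a := by omega
      rw [h4, add_sub_cancel_left]
  rw [hbij]
  have hsplit : 2 * n + 1 = (n + 1) + n := by omega
  rw [hsplit, Finset.sum_range_add]
  have hfirst : ∑ j ∈ Finset.range (n + 1), ((2 * n).choose j : ℤ) * |(j : ℤ) - n|
      = ∑ k ∈ Finset.range (n + 1), (k : ℤ) * (2 * n).choose (n + k) := by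
    rw [← Finset.sum_range_reflect (fun j => ((2 * n).choose j : ℤ) * |(j : ℤ) - n|) (n + 1)]
    apply Finset.sum_congr rfl
    intro k hk
    simp only [Finset.mem_range] at hk
    have hkn : k ≤ n := by omega
    have h1 : n + 1 - 1 - k = n - k := by omega
    rw [h1]
    have h2 : (2 * n).choose (n - k) = (2 * n).choose (n + k) := by
      have : n - k = 2 * n - (n + k) := by omega
      rw [this, Nat.choose_symm (by omega)]
    rw [h2]
    have h3 : |((n - k : ℕ) : ℤ) - n| = k := by
      rw [Nat.cast_sub hkn]
      rw [abs_of_nonpos (by omega)]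
      ring
    rw [h3]
    ring
  have hsecond : ∑ k ∈ Finset.range n, ((2 * n).choose ((n + 1) + k) : ℤ) * |((((n+1) + k : ℕ)) : ℤ) - n|
      = ∑ k ∈ Finset.range (n + 1), (k : ℤ) * (2 * n).choose (n + k) := by
    rw [Finset.sum_range_succ' (fun k => (k : ℤ) * (2 * n).choose (n + k))]
    simp only [Nat.cast_zero, zero_mul, add_zero]
    apply Finset.sum_congr rfl
    intro k hk
    have h1 : (n + 1) + k = n + (k + 1) := by omega
    rw [h1]
    have h2 : |(((n + (k + 1) : ℕ)) : ℤ) - n| = (k : ℤ) + 1 := by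
      push_cast
      rw [abs_of_nonneg (by omega)]
      ring
    rw [h2]
    push_cast
    ring
  rw [hfirst, hsecond, ← two_mul, S2]
end

section
/- For all natural numbers β, m, n, the double sum over integers k, ℓ of binom(2m, m+k) * binom(2n, n+ℓ) * |k-ℓ|^β equals the single sum over integers k of binom(2m+2n, m+n+k) * |k|^β. (Here 0^0 is interpreted as 1.) -/
lemma ichoose_eq_zero_of_neg {n : ℕ} {k : ℤ} (h : k < 0) : ichoose n k = 0 := by
  simp [ichoose, not_le.2 h]

lemma ichoose_eq_zero_of_lt {n : ℕ} {k : ℤ} (h : (n : ℤ) < k) : ichoose n k = 0 := by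
  have h0 : 0 ≤ k := le_of_lt (lt_of_le_of_lt (Int.ofNat_nonneg n) h)
  simp only [ichoose, if_pos h0]
  rw [Nat.choose_eq_zero_of_lt (by omega)]
  simp

lemma ichoose_symm (N : ℕ) (k : ℤ) : ichoose N k = ichoose N ((N : ℤ) - k) := by
  rcases lt_or_ge k 0 with h | h
  · rw [ichoose_eq_zero_of_neg h, ichoose_eq_zero_of_lt (by omega)]
  rcases lt_or_ge (N : ℤ) k with h2 | h2
  · rw [ichoose_eq_zero_of_lt h2, ichoose_eq_zero_of_neg (by omega)]
  · simp only [ichoose, if_pos h, if_pos (by omega : (0:ℤ) ≤ (N:ℤ) - k)]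
    have : ((N:ℤ) - k).toNat = N - k.toNat := by omega
    rw [this, Nat.choose_symm (by omega)]

lemma ichoose_succ (n : ℕ) (k : ℤ) :
    ichoose (n + 1) k = ichoose n k + ichoose n (k - 1) := by
  rcases lt_or_ge k 0 with h | h
  · rw [ichoose_eq_zero_of_neg h, ichoose_eq_zero_of_neg h,
      ichoose_eq_zero_of_neg (by omega)]
    ring
  rcases eq_or_lt_of_le h with h0 | h0
  · simp [ichoose, ← h0]
  · have h1 : (0:ℤ) ≤ k - 1 := by omega
    simp only [ichoose, if_pos h, if_pos h1]
    have : k.toNat = (k - 1).toNat + 1 := by omega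
    rw [this, Nat.choose_succ_succ']
    push_cast
    ring

lemma supp_fin (f : ℤ → ℤ) (s : Finset ℤ) (h : ∀ x ∉ s, f x = 0) :
    (Function.support f).Finite :=
  Set.Finite.subset s.finite_toSet (Function.support_subset_iff'.mpr h)

lemma ichoose_mul_supp_fin (b : ℕ) (g : ℤ → ℤ) :
    (Function.support fun j => g j * ichoose b j).Finite := by
  refine supp_fin _ (Finset.Icc (0 : ℤ) b) fun x hx => ?_
  simp only [Finset.mem_Icc, not_and_or, not_le] at hx
  rcases hx with h | h
  · rw [ichoose_eq_zero_of_neg h, mul_zero]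
  · rw [ichoose_eq_zero_of_lt h, mul_zero]

lemma vand (a b : ℕ) (K : ℤ) :
    ∑ᶠ j : ℤ, ichoose a (K - j) * ichoose b j = ichoose (a + b) K := by
  induction b generalizing K with
  | zero =>
    rw [finsum_eq_single _ (0 : ℤ)]
    · simp [ichoose]
    · intro j hj
      rcases lt_or_ge j 0 with h | h
      · rw [ichoose_eq_zero_of_neg h, mul_zero]
      · rw [ichoose_eq_zero_of_lt (n := 0) (k := j) (by omega), mul_zero]
  | succ b ih =>
    have h1 : ∀ j : ℤ, ichoose a (K - j) * ichoose (b + 1) j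
        = ichoose a (K - j) * ichoose b j + ichoose a (K - j) * ichoose b (j - 1) := by
      intro j; rw [ichoose_succ]; ring
    rw [finsum_congr h1, finsum_add_distrib (ichoose_mul_supp_fin b _)
      (by
        refine supp_fin _ (Finset.Icc (0 : ℤ) (b + 1)) fun x hx => ?_
        simp only [Finset.mem_Icc, not_and_or, not_le] at hx
        rcases hx with h | h
        · rw [ichoose_eq_zero_of_neg (k := x - 1) (by omega), mul_zero]
        · rw [ichoose_eq_zero_of_lt (n := b) (k := x - 1) (by omega), mul_zero]), ih K]
    have h2 : (∑ᶠ j : ℤ, ichoose a (K - j) * ichoose b (j - 1))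
        = ∑ᶠ j : ℤ, ichoose a ((K - 1) - j) * ichoose b j := by
      rw [← finsum_comp_equiv (Equiv.addRight (1 : ℤ))
        (f := fun j => ichoose a (K - j) * ichoose b (j - 1))]
      refine finsum_congr fun j => ?_
      simp only [Equiv.coe_addRight]
      ring_nf
    rw [h2, ih (K - 1)]
    have : a + (b + 1) = (a + b) + 1 := by ring
    rw [this, ichoose_succ]

lemma ichoose_inner_sum (m n : ℕ) (d : ℤ) :
    ∑ᶠ l : ℤ, ichoose (2 * m) (m + (d + l)) * ichoose (2 * n) (n + l)
      = ichoose (2 * m + 2 * n) (m + n + d) := by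
  rw [← finsum_comp_equiv (Equiv.subRight (n : ℤ))
    (f := fun l => ichoose (2 * m) (m + (d + l)) * ichoose (2 * n) (n + l))]
  have h1 : ∀ j : ℤ,
      ichoose (2 * m) (m + (d + (Equiv.subRight (n : ℤ) j)))
        * ichoose (2 * n) (n + (Equiv.subRight (n : ℤ) j))
      = ichoose (2 * m) ((m + n - d) - j) * ichoose (2 * n) j := by
    intro j
    simp only [Equiv.subRight_apply]
    rw [ichoose_symm (2 * m) (↑m + (d + (j - ↑n)))]
    congr 1
    · congr 1; push_cast; ring
    · congr 1; ring
  rw [finsum_congr h1, vand (2 * m) (2 * n) (m + n - d),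
    ichoose_symm (2 * m + 2 * n) (↑m + ↑n - d)]
  congr 1
  push_cast
  ring

theorem stmt1 (β m n : ℕ) :
    ∑ᶠ k : ℤ, ∑ᶠ l : ℤ,
        ichoose (2 * m) (m + k) * ichoose (2 * n) (n + l) * |k - l| ^ β
      = ∑ᶠ k : ℤ, ichoose (2 * m + 2 * n) (m + n + k) * |k| ^ β := by
  classical
  set A := Finset.Icc (-(m:ℤ)) (m:ℤ) with hA
  set B := Finset.Icc (-(n:ℤ)) (n:ℤ) with hB
  set C := Finset.Icc (-((m:ℤ)+(n:ℤ))) ((m:ℤ)+(n:ℤ)) with hC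
  have hzm : ∀ k : ℤ, k ∉ A → ichoose (2 * m) (m + k) = 0 := by
    intro k hk
    simp only [hA, Finset.mem_Icc, not_and_or, not_le] at hk
    rcases hk with h | h
    · exact ichoose_eq_zero_of_neg (by omega)
    · exact ichoose_eq_zero_of_lt (by push_cast; omega)
  have hzn : ∀ l : ℤ, l ∉ B → ichoose (2 * n) (n + l) = 0 := by
    intro l hl
    simp only [hB, Finset.mem_Icc, not_and_or, not_le] at hl
    rcases hl with h | h
    · exact ichoose_eq_zero_of_neg (by omega)
    · exact ichoose_eq_zero_of_lt (by push_cast; omega)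
  -- LHS to finset
  have e1 : ∀ k : ℤ,
      (∑ᶠ l : ℤ, ichoose (2 * m) (m + k) * ichoose (2 * n) (n + l) * |k - l| ^ β)
      = ∑ l ∈ B, ichoose (2 * m) (m + k) * ichoose (2 * n) (n + l) * |k - l| ^ β := by
    intro k
    apply finsum_eq_finset_sum_of_support_subset
    refine Function.support_subset_iff'.mpr fun l hl => ?_
    rw [hzn l hl, mul_zero, zero_mul]
  rw [finsum_congr e1]
  rw [finsum_eq_finset_sum_of_support_subset _ (s := A)
    (Function.support_subset_iff'.mpr fun k hk =>
      Finset.sum_eq_zero fun l _ => by rw [hzm k hk, zero_mul, zero_mul])]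
  -- RHS to finset
  have hzmn : ∀ d : ℤ, d ∉ C → ichoose (2 * m + 2 * n) (m + n + d) = 0 := by
    intro d hd
    simp only [hC, Finset.mem_Icc, not_and_or, not_le] at hd
    rcases hd with h | h
    · exact ichoose_eq_zero_of_neg (by omega)
    · exact ichoose_eq_zero_of_lt (by push_cast; omega)
  rw [finsum_eq_finset_sum_of_support_subset _ (s := C)
    (Function.support_subset_iff'.mpr fun d hd => by rw [hzmn d hd, zero_mul])]
  -- key identity at finset level
  symm
  have step1 : ∀ d : ℤ, ichoose (2 * m + 2 * n) (↑m + ↑n + d) * |d| ^ β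
      = ∑ l ∈ B, ichoose (2 * m) (↑m + (d + l)) * ichoose (2 * n) (↑n + l) * |d| ^ β := by
    intro d
    rw [← Finset.sum_mul]
    congr 1
    rw [← ichoose_inner_sum m n d]
    apply finsum_eq_finset_sum_of_support_subset
    refine Function.support_subset_iff'.mpr fun l hl => ?_
    rw [hzn l hl, mul_zero]
  rw [Finset.sum_congr rfl fun d _ => step1 d, Finset.sum_comm]
  rw [Finset.sum_comm (s := A)]
  refine Finset.sum_congr rfl fun l hl => ?_
  simp only [hB, Finset.mem_Icc] at hl
  have e2 : ∀ d : ℤ, ichoose (2 * m) (↑m + (d + l)) * ichoose (2 * n) (↑n + l) * |d| ^ β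
      = ichoose (2 * m) (↑m + (d + l)) * ichoose (2 * n) (↑n + l) * |(d + l) - l| ^ β := by
    intro d; rw [add_sub_cancel_right]
  rw [Finset.sum_congr rfl fun d _ => e2 d]
  have e3 : (∑ k ∈ C.map (addRightEmbedding l),
        ichoose (2 * m) (↑m + k) * ichoose (2 * n) (↑n + l) * |k - l| ^ β)
      = ∑ d ∈ C, ichoose (2 * m) (↑m + (d + l)) * ichoose (2 * n) (↑n + l)
        * |(d + l) - l| ^ β := by
    rw [Finset.sum_map]
    exact Finset.sum_congr rfl fun d _ => rfl
  rw [← e3, hC, Finset.map_add_right_Icc]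
  symm
  apply Finset.sum_subset
  · intro k hk
    simp only [hA, Finset.mem_Icc] at hk
    simp only [Finset.mem_Icc]
    omega
  · intro k _ hk
    rw [hzm k hk, zero_mul, zero_mul]
end

section
/- For all natural numbers n and β, the double sum over integers k, ℓ of binom(n, k) * binom(n, ℓ) * |k-ℓ|^β equals the sum over integers k of binom(2n, n+k) * |k|^β. -/
open Finset

lemma ichoose_bounds {n : ℕ} {k : ℤ} (h : ichoose n k ≠ 0) : 0 ≤ k ∧ k ≤ n := by
  unfold ichoose at h
  split_ifs at h with hk
  · refine ⟨hk, ?_⟩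
    by_contra hk2
    push_neg at hk2
    rw [Nat.choose_eq_zero_of_lt (by omega : n < k.toNat)] at h
    simp at h
  · exact absurd rfl h

lemma ichoose_eq_zero {n : ℕ} {k : ℤ} (h : ¬ (0 ≤ k ∧ k ≤ n)) : ichoose n k = 0 := by
  by_contra h'
  exact h (ichoose_bounds h')

lemma natvand (n m : ℕ) :
    ∑ l ∈ Finset.range (n+1), n.choose (l+m) * n.choose l = (2*n).choose (n+m) := by
  rw [two_mul, Nat.add_choose_eq, Finset.Nat.sum_antidiagonal_eq_sum_range_succ_mk]
  rw [← Finset.sum_subset (Finset.range_subset_range.2 (by omega : n+1 ≤ n+m+1))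
      (by intro x _ hx; simp only [Finset.mem_range] at hx ⊢
          rw [Nat.choose_eq_zero_of_lt (by omega), zero_mul])]
  rw [← Finset.sum_range_reflect]
  apply Finset.sum_congr rfl
  intro l hl
  simp only [Finset.mem_range] at hl
  have h1 : n + 1 - 1 - l = n - l := by omega
  rw [h1, show n - l + m = n + m - l by omega, Nat.choose_symm (by omega : l ≤ n), mul_comm]

lemma ichoose_symm_s2 (n : ℕ) (d : ℤ) : ichoose (2*n) (n+d) = ichoose (2*n) (n-d) := by
  unfold ichoose
  split_ifs with h1 h2 h2
  · have hb : ((n:ℤ)+d).toNat ≤ 2*n := by omega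
    rw [show ((n:ℤ)-d).toNat = 2*n - ((n:ℤ)+d).toNat by omega, Nat.choose_symm hb]
  · rw [Nat.choose_eq_zero_of_lt (by omega : 2*n < ((n:ℤ)+d).toNat)]; simp
  · rw [Nat.choose_eq_zero_of_lt (by omega : 2*n < ((n:ℤ)-d).toNat)]; simp
  · omega

lemma ichoose_cast (a b : ℕ) : ichoose a (b : ℤ) = (a.choose b : ℤ) := by
  simp [ichoose]

lemma vand_nonneg (n m : ℕ) :
    ∑ᶠ l : ℤ, ichoose n (l + m) * ichoose n l = ichoose (2*n) (n + m) := by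
  have hsupp : Function.support (fun l : ℤ => ichoose n (l + m) * ichoose n l)
      ⊆ (Finset.Icc (0:ℤ) n : Finset ℤ) := by
    intro l hl
    simp only [Function.mem_support] at hl
    have h2 := ichoose_bounds (n := n) (k := l) (fun h => hl (by rw [h, mul_zero]))
    simp only [Finset.coe_Icc, Set.mem_Icc]
    exact h2
  rw [finsum_eq_sum_of_support_subset _ hsupp]
  have himg : Finset.Icc (0:ℤ) (n:ℤ) = (Finset.range (n+1)).image (Nat.cast : ℕ → ℤ) := by
    ext x
    simp only [Finset.mem_Icc, Finset.mem_image, Finset.mem_range]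
    constructor
    · rintro ⟨h1, h2⟩; exact ⟨x.toNat, by omega, by omega⟩
    · rintro ⟨a, ha, rfl⟩; omega
  rw [himg, Finset.sum_image (by intro a _ b _ h; exact_mod_cast h)]
  have : ∀ l ∈ Finset.range (n+1),
      ichoose n ((l:ℤ) + m) * ichoose n l = ((n.choose (l+m) * n.choose l : ℕ) : ℤ) := by
    intro l _
    rw [show ((l:ℤ) + m) = ((l + m : ℕ) : ℤ) by push_cast; ring, ichoose_cast, ichoose_cast]
    push_cast; ring
  rw [Finset.sum_congr rfl this, ← Nat.cast_sum, natvand,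
    show ((n:ℤ) + m) = ((n + m : ℕ) : ℤ) by push_cast; ring, ichoose_cast]

lemma vand_s2 (n : ℕ) (d : ℤ) :
    ∑ᶠ l : ℤ, ichoose n (l + d) * ichoose n l = ichoose (2*n) (n + d) := by
  rcases le_or_gt 0 d with hd | hd
  · obtain ⟨m, rfl⟩ := Int.eq_ofNat_of_zero_le hd
    exact vand_nonneg n m
  · obtain ⟨m, rfl⟩ : ∃ m : ℕ, d = -(m:ℤ) := ⟨(-d).toNat, by omega⟩
    rw [ichoose_symm_s2 n (-(m:ℤ)), show (n:ℤ) - -(m:ℤ) = (n:ℤ) + m by ring, ← vand_nonneg n m,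
      ← finsum_comp_equiv (Equiv.addRight (m:ℤ))]
    apply finsum_congr
    intro l
    simp only [Equiv.coe_addRight]
    rw [show l + (m:ℤ) + -(m:ℤ) = l by ring, mul_comm]

theorem stmt2 (n β : ℕ) :
    ∑ᶠ k : ℤ, ∑ᶠ l : ℤ, ichoose n k * ichoose n l * |k - l| ^ β
      = ∑ᶠ k : ℤ, ichoose (2 * n) (n + k) * |k| ^ β := by
  classical
  have step1 : ∀ k : ℤ, (∑ᶠ l : ℤ, ichoose n k * ichoose n l * |k - l| ^ β)
      = ∑ᶠ d : ℤ, ichoose n k * ichoose n (k - d) * |d| ^ β := by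
    intro k
    rw [← finsum_comp_equiv (Equiv.subLeft k)]
    apply finsum_congr
    intro d
    simp only [Equiv.subLeft_apply]
    rw [show k - (k - d) = d by ring]
  simp only [step1]
  -- outer sum has support in Icc 0 n
  have houter : Function.support
      (fun k : ℤ => ∑ᶠ d : ℤ, ichoose n k * ichoose n (k - d) * |d| ^ β)
      ⊆ (Finset.Icc (0:ℤ) (n:ℤ) : Finset ℤ) := by
    intro k hk
    simp only [Function.mem_support] at hk
    simp only [Finset.coe_Icc, Set.mem_Icc]
    by_contra hmem
    apply hk
    have hz : ichoose n k = 0 := ichoose_eq_zero (by simpa using hmem)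
    have : (fun d : ℤ => ichoose n k * ichoose n (k - d) * |d| ^ β) = fun _ => 0 := by
      funext d; rw [hz, zero_mul, zero_mul]
    rw [this, finsum_zero]
  rw [finsum_eq_sum_of_support_subset _ houter]
  have hinner : ∀ k ∈ Finset.Icc (0:ℤ) (n:ℤ),
      (∑ᶠ d : ℤ, ichoose n k * ichoose n (k - d) * |d| ^ β)
      = ∑ d ∈ Finset.Icc (-(n:ℤ)) (n:ℤ), ichoose n k * ichoose n (k - d) * |d| ^ β := by
    intro k hk
    simp only [Finset.mem_Icc] at hk
    apply finsum_eq_sum_of_support_subset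
    intro d hd
    simp only [Function.mem_support] at hd
    simp only [Finset.coe_Icc, Set.mem_Icc]
    have h2 : ichoose n (k - d) ≠ 0 := fun h => hd (by rw [h, mul_zero, zero_mul])
    have := ichoose_bounds h2
    constructor <;> omega
  rw [Finset.sum_congr rfl hinner, Finset.sum_comm]
  -- right hand side
  have hrsupp : Function.support (fun k : ℤ => ichoose (2 * n) (n + k) * |k| ^ β)
      ⊆ (Finset.Icc (-(n:ℤ)) (n:ℤ) : Finset ℤ) := by
    intro k hk
    simp only [Function.mem_support] at hk
    have h2 : ichoose (2*n) ((n:ℤ) + k) ≠ 0 := fun h => hk (by rw [h, zero_mul])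
    have hb := ichoose_bounds h2
    simp only [Finset.coe_Icc, Set.mem_Icc]
    have : ((n:ℤ) + k) ≤ ((2*n : ℕ) : ℤ) := hb.2
    push_cast at this
    constructor <;> omega
  rw [finsum_eq_sum_of_support_subset _ hrsupp]
  apply Finset.sum_congr rfl
  intro d _
  rw [← Finset.sum_mul]
  congr 1
  have hsup : Function.support (fun k : ℤ => ichoose n k * ichoose n (k - d))
      ⊆ (Finset.Icc (0:ℤ) (n:ℤ) : Finset ℤ) := by
    intro k hk
    simp only [Function.mem_support] at hk
    have h1 : ichoose n k ≠ 0 := fun h => hk (by rw [h, zero_mul])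
    simpa only [Finset.coe_Icc, Set.mem_Icc] using ichoose_bounds h1
  rw [← finsum_eq_sum_of_support_subset _ hsup]
  have : ∀ k : ℤ, ichoose n k * ichoose n (k - d) = ichoose n (k + -d) * ichoose n k := by
    intro k; rw [show k + -d = k - d by ring, mul_comm]
  rw [finsum_congr this, vand_s2 n (-d), ichoose_symm_s2 n (-d), show (n:ℤ) - -d = (n:ℤ) + d by ring]
end

section
/- For all natural numbers n, the double sum over integers k, ℓ of binom(2n, n+k) * binom(2n, n+ℓ) * |k^2 - ℓ^2| equals 2 * n^2 * binom(2n, n)^2. -/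
open Finset
open scoped symmDiff

theorem ichoose_natCast (N i : ℕ) : ichoose N i = N.choose i := by
  simp [ichoose]

theorem exists_natCast_of_ichoose_ne_zero {N : ℕ} {j : ℤ} (h : ichoose N j ≠ 0) :
    ∃ i ≤ N, (i : ℤ) = j := by
  unfold ichoose at h
  split_ifs at h with hj
  · exact ⟨j.toNat, by_contra fun hN => h (by simp [Nat.choose_eq_zero_of_lt (not_le.1 hN)]),
      Int.toNat_of_nonneg hj⟩
  · exact absurd rfl h

theorem finsum_ichoose_add_mul (N : ℕ) (c : ℤ) (g : ℤ → ℤ) :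
    ∑ᶠ k : ℤ, ichoose N (c + k) * g k
      = ∑ i ∈ range (N + 1), (N.choose i : ℤ) * g (i - c) := by
  rw [← finsum_comp_equiv (Equiv.subRight c)]
  simp only [Equiv.subRight_apply, add_sub_cancel]
  rw [finsum_eq_sum_of_support_subset (s := (range (N + 1)).map Nat.castEmbedding)]
  · simp [ichoose_natCast]
  · intro j hj
    obtain ⟨i, hi, rfl⟩ := exists_natCast_of_ichoose_ne_zero (left_ne_zero_of_mul hj)
    simpa [Nat.lt_succ_iff] using hi

theorem finsum_finsum_ichoose_add_mul (N : ℕ) (c : ℤ) (g : ℤ → ℤ → ℤ) :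
    ∑ᶠ k : ℤ, ∑ᶠ l : ℤ, ichoose N (c + k) * ichoose N (c + l) * g k l
      = ∑ i ∈ range (N + 1), ∑ j ∈ range (N + 1),
          (N.choose i : ℤ) * N.choose j * g (i - c) (j - c) := by
  have inner (k : ℤ) : ∑ᶠ l : ℤ, ichoose N (c + k) * ichoose N (c + l) * g k l
      = ichoose N (c + k) * ∑ j ∈ range (N + 1), (N.choose j : ℤ) * g k (j - c) := by
    calc _ = ∑ᶠ l : ℤ, ichoose N (c + l) * (ichoose N (c + k) * g k l) :=
          finsum_congr fun l => by ring
      _ = _ := by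
          rw [finsum_ichoose_add_mul, mul_sum]
          exact sum_congr rfl fun j _ => by ring
  simp_rw [inner, finsum_ichoose_add_mul, mul_sum, mul_assoc]

def binomAbsDev (m : ℕ) : ℤ := ∑ i ∈ range (m + 1), (m.choose i : ℤ) * |(m : ℤ) - 2 * i|

theorem sum_powerset_abs_card_sub_two_mul_card {α : Type*} (D : Finset α) :
    ∑ S ∈ D.powerset, |(#D : ℤ) - 2 * #S| = binomAbsDev #D := by
  rw [sum_powerset_apply_card (fun i => |(#D : ℤ) - 2 * i|), binomAbsDev]
  simp only [nsmul_eq_mul]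

theorem card_symmDiff_add_two_mul_card_inter {α : Type*} [DecidableEq α] (s t : Finset α) :
    #(s ∆ t) + 2 * #(s ∩ t) = #s + #t := by
  rw [symmDiff_eq_sup_sdiff_inf, sup_eq_union, inf_eq_inter,
    card_sdiff_of_subset inter_subset_union, ← card_union_add_card_inter]
  have := card_le_card (inter_subset_union (s := s) (t := t))
  omega

section Subsets

variable {α : Type*} [Fintype α]

theorem sum_finset_apply_card {M : Type*} [AddCommMonoid M] (f : ℕ → M) :
    ∑ X : Finset α, f #X
      = ∑ i ∈ range (Fintype.card α + 1), (Fintype.card α).choose i • f i := by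
  rw [← powerset_univ, sum_powerset_apply_card, card_univ]

theorem sum_sum_finset_apply_card {R : Type*} [CommSemiring R] (f : ℕ → ℕ → R) :
    ∑ X : Finset α, ∑ Y : Finset α, f #X #Y
      = ∑ i ∈ range (Fintype.card α + 1), ∑ j ∈ range (Fintype.card α + 1),
          (Fintype.card α).choose i * (Fintype.card α).choose j * f i j := by
  simp only [sum_finset_apply_card (f _)]
  rw [sum_finset_apply_card (fun i => ∑ j ∈ range (Fintype.card α + 1),
    (Fintype.card α).choose j • f i j)]
  simp only [nsmul_eq_mul, mul_sum, mul_assoc]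

variable [DecidableEq α]

theorem sum_powerset_sum_powerset_compl {M : Type*} [AddCommMonoid M] (D : Finset α)
    (f : Finset α → Finset α → M) :
    ∑ S ∈ D.powerset, ∑ P ∈ Dᶜ.powerset, f S P = ∑ X, f (X ∩ D) (X \ D) := by
  rw [← sum_product']
  symm
  refine sum_nbij' (fun X => (X ∩ D, X \ D)) (fun p => p.1 ∪ p.2) ?_ ?_ ?_ ?_ ?_
  · intro X _
    simp [subset_iff]
  · simp
  · intro X _
    ext; simp; tauto
  · rintro ⟨S, P⟩ h
    simp only [mem_product, mem_powerset, subset_iff, mem_compl] at h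
    simp only [Prod.mk.injEq]
    constructor <;> ext x <;> simp only [mem_inter, mem_union, mem_sdiff] <;>
      have := @h.1 x <;> have := @h.2 x <;> tauto
  · intros; rfl

theorem abs_card_sub_mul_abs_card_add_sub_symmDiff (X D : Finset α) :
    |(#X : ℤ) - #(X ∆ D)| * |(#X : ℤ) + #(X ∆ D) - Fintype.card α|
      = |(#D : ℤ) - 2 * #(X ∩ D)| * |(#Dᶜ : ℤ) - 2 * #(X \ D)| := by
  have hX := card_sdiff_add_card_inter X D
  have hY := card_symmDiff_add_two_mul_card_inter X D
  have hD := card_add_card_compl D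
  have h1 : (#X : ℤ) - #(X ∆ D) = -((#D : ℤ) - 2 * #(X ∩ D)) := by omega
  have h2 : (#X : ℤ) + #(X ∆ D) - Fintype.card α = -((#Dᶜ : ℤ) - 2 * #(X \ D)) := by omega
  rw [h1, h2, abs_neg, abs_neg]

theorem sum_sum_abs_card_sub_mul_abs_card_add_sub :
    ∑ X : Finset α, ∑ Y : Finset α, |(#X : ℤ) - #Y| * |(#X : ℤ) + #Y - Fintype.card α|
      = ∑ D : Finset α, binomAbsDev #D * binomAbsDev #Dᶜ := by
  calc _ = ∑ X : Finset α, ∑ D : Finset α,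
        |(#D : ℤ) - 2 * #(X ∩ D)| * |(#Dᶜ : ℤ) - 2 * #(X \ D)| := by
        refine sum_congr rfl fun X _ => ?_
        rw [← Fintype.sum_bijective _ (symmDiff_right_involutive X).bijective _ _ fun _ => rfl]
        simp only [abs_card_sub_mul_abs_card_add_sub_symmDiff]
    _ = _ := by
        rw [sum_comm]
        refine sum_congr rfl fun D _ => ?_
        rw [← sum_powerset_abs_card_sub_two_mul_card, ← sum_powerset_abs_card_sub_two_mul_card,
          sum_mul_sum, sum_powerset_sum_powerset_compl]

end Subsets

theorem sum_range_choose_mul_choose_mul_abs_sub_mul_abs_add_sub (N : ℕ) :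
    ∑ i ∈ range (N + 1), ∑ j ∈ range (N + 1),
        (N.choose i : ℤ) * N.choose j * (|(i : ℤ) - j| * |(i : ℤ) + j - N|)
      = ∑ m ∈ range (N + 1), (N.choose m : ℤ) * (binomAbsDev m * binomAbsDev (N - m)) := by
  have h := sum_sum_abs_card_sub_mul_abs_card_add_sub (α := Fin N)
  rw [sum_sum_finset_apply_card
    (fun i j => |(i : ℤ) - j| * |(i : ℤ) + j - Fintype.card (Fin N)|)] at h
  simp only [card_compl] at h
  rw [sum_finset_apply_card
    (fun i => binomAbsDev i * binomAbsDev (Fintype.card (Fin N) - i))] at h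
  simpa only [Fintype.card_fin, nsmul_eq_mul] using h

theorem sum_range_choose_mul_sub_two_mul (m h : ℕ) :
    ∑ i ∈ range (h + 1), (m.choose i : ℤ) * (m - 2 * i) = m * (m - 1).choose h := by
  induction h with
  | zero => simp
  | succ h ih =>
    rw [sum_range_succ, ih]
    cases m with
    | zero => simp
    | succ m =>
      have pascal : ((m + 1).choose (h + 1) : ℤ) = m.choose h + m.choose (h + 1) := by
        exact_mod_cast Nat.choose_succ_succ m h
      have absorb : ((m + 1 : ℕ) : ℤ) * m.choose h = (m + 1).choose (h + 1) * (h + 1) := by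
        exact_mod_cast Nat.add_one_mul_choose_eq m h
      simp only [Nat.add_sub_cancel]
      push_cast at absorb ⊢
      linear_combination (2 : ℤ) * absorb + ((m : ℤ) + 1) * pascal

theorem binomAbsDev_eq (m : ℕ) : binomAbsDev m = 2 * m * (m - 1).choose (m / 2) := by
  have abs_eq (x : ℤ) : |x| = 2 * max x 0 - x := by grind
  have total : ∑ i ∈ range (m + 1), (m.choose i : ℤ) * (m - 2 * i) = 0 := by
    rw [sum_range_choose_mul_sub_two_mul]
    rcases m with _ | m <;> simp
  have positive_part : ∑ i ∈ range (m + 1), (m.choose i : ℤ) * max ((m : ℤ) - 2 * i) 0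
      = ∑ i ∈ range (m / 2 + 1), (m.choose i : ℤ) * (m - 2 * i) := by
    rw [← sum_subset (range_subset_range.2 (by omega : m / 2 + 1 ≤ m + 1))]
    · refine sum_congr rfl fun i hi => ?_
      rw [max_eq_left (by simp at hi; omega)]
    · intro i _ hi
      rw [max_eq_right (by simp at hi; omega), mul_zero]
  calc binomAbsDev m
      = ∑ i ∈ range (m + 1), (2 * ((m.choose i : ℤ) * max ((m : ℤ) - 2 * i) 0)
          - (m.choose i : ℤ) * (m - 2 * i)) :=
        sum_congr rfl fun i _ => by rw [abs_eq]; ring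
    _ = 2 * m * (m - 1).choose (m / 2) := by
        rw [sum_sub_distrib, ← mul_sum, positive_part, total, sum_range_choose_mul_sub_two_mul]
        ring

theorem binomAbsDev_two_mul (r : ℕ) : binomAbsDev (2 * r) = 2 * r * (2 * r).choose r := by
  rw [binomAbsDev_eq]
  rcases r with _ | r
  · simp
  · have h : ((2 * r + 1).choose (r + 1) : ℤ) * (2 * (r + 1))
        = (2 * (r + 1)).choose (r + 1) * (r + 1) := by
      have := Nat.choose_mul_succ_eq (2 * r + 1) (r + 1)
      rw [show 2 * r + 1 + 1 = 2 * (r + 1) by ring,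
        show 2 * (r + 1) - (r + 1) = r + 1 by omega] at this
      exact_mod_cast this
    rw [show 2 * (r + 1) - 1 = 2 * r + 1 by omega, show 2 * (r + 1) / 2 = r + 1 by omega]
    push_cast
    linear_combination (2 : ℤ) * h

theorem binomAbsDev_two_mul_add_one (r : ℕ) :
    binomAbsDev (2 * r + 1) = 2 * (2 * r + 1) * (2 * r).choose r := by
  rw [binomAbsDev_eq, show (2 * r + 1) / 2 = r by omega, Nat.add_sub_cancel]
  push_cast; ring

theorem choose_mul_choose_mul_choose_even (r c : ℕ) :
    ((2 * (r + c)).choose (2 * r) * ((2 * r).choose r * (2 * c).choose c) : ℚ)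
      = (2 * (r + c)).choose (r + c) * (r + c).choose r ^ 2 := by
  rw [Nat.cast_choose ℚ (by omega : 2 * r ≤ 2 * (r + c)),
    Nat.cast_choose ℚ (by omega : r ≤ 2 * r), Nat.cast_choose ℚ (by omega : c ≤ 2 * c),
    Nat.cast_choose ℚ (by omega : r + c ≤ 2 * (r + c)),
    Nat.cast_choose ℚ (by omega : r ≤ r + c), show 2 * (r + c) - 2 * r = 2 * c by omega,
    show 2 * r - r = r by omega, show 2 * c - c = c by omega,
    show 2 * (r + c) - (r + c) = r + c by omega, show r + c - r = c by omega]
  field_simp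

theorem choose_mul_choose_mul_choose_odd (r c : ℕ) :
    ((2 * (r + c) + 2).choose (2 * r + 1) *
        ((2 * r + 1) * (2 * r).choose r * ((2 * c + 1) * (2 * c).choose c)) : ℚ)
      = (c + 1) ^ 2 * ((2 * (r + c) + 2).choose (r + c + 1) * (r + c + 1).choose r ^ 2) := by
  rw [Nat.cast_choose ℚ (by omega : 2 * r + 1 ≤ 2 * (r + c) + 2),
    Nat.cast_choose ℚ (by omega : r ≤ 2 * r), Nat.cast_choose ℚ (by omega : c ≤ 2 * c),
    Nat.cast_choose ℚ (by omega : r + c + 1 ≤ 2 * (r + c) + 2),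
    Nat.cast_choose ℚ (by omega : r ≤ r + c + 1),
    show 2 * (r + c) + 2 - (2 * r + 1) = 2 * c + 1 by omega, show 2 * r - r = r by omega,
    show 2 * c - c = c by omega,
    show 2 * (r + c) + 2 - (r + c + 1) = r + c + 1 by omega, show r + c + 1 - r = c + 1 by omega,
    Nat.factorial_succ (2 * r), Nat.factorial_succ (2 * c), Nat.factorial_succ c]
  push_cast
  field_simp

theorem choose_mul_binomAbsDev_mul_binomAbsDev_even {n r : ℕ} (h : r ≤ n) :
    ((2 * n).choose (2 * r) : ℤ) * (binomAbsDev (2 * r) * binomAbsDev (2 * n - 2 * r))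
      = 4 * r * (n - r) * ((2 * n).choose n * n.choose r ^ 2) := by
  obtain ⟨c, rfl⟩ := Nat.exists_eq_add_of_le h
  have key : ((2 * (r + c)).choose (2 * r) * ((2 * r).choose r * (2 * c).choose c) : ℤ)
      = (2 * (r + c)).choose (r + c) * (r + c).choose r ^ 2 := by
    exact_mod_cast choose_mul_choose_mul_choose_even r c
  rw [show 2 * (r + c) - 2 * r = 2 * c by omega, binomAbsDev_two_mul, binomAbsDev_two_mul]
  push_cast
  linear_combination (4 * r * c : ℤ) * key

theorem choose_mul_binomAbsDev_mul_binomAbsDev_odd {n r : ℕ} (h : r < n) :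
    ((2 * n).choose (2 * r + 1) : ℤ) *
        (binomAbsDev (2 * r + 1) * binomAbsDev (2 * n - (2 * r + 1)))
      = 4 * (n - r) ^ 2 * ((2 * n).choose n * n.choose r ^ 2) := by
  obtain ⟨c, rfl⟩ := Nat.exists_eq_add_of_lt h
  have key : ((2 * (r + c) + 2).choose (2 * r + 1) *
        ((2 * r + 1) * (2 * r).choose r * ((2 * c + 1) * (2 * c).choose c)) : ℤ)
      = (c + 1) ^ 2 * ((2 * (r + c) + 2).choose (r + c + 1) * (r + c + 1).choose r ^ 2) := by
    exact_mod_cast choose_mul_choose_mul_choose_odd r c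
  rw [show 2 * (r + c + 1) = 2 * (r + c) + 2 by ring,
    show 2 * (r + c) + 2 - (2 * r + 1) = 2 * c + 1 by omega,
    binomAbsDev_two_mul_add_one, binomAbsDev_two_mul_add_one]
  push_cast
  linear_combination 4 * key

theorem sum_range_two_mul {M : Type*} [AddCommMonoid M] (f : ℕ → M) (k : ℕ) :
    ∑ m ∈ range (2 * k), f m = ∑ r ∈ range k, (f (2 * r) + f (2 * r + 1)) := by
  induction k with
  | zero => simp
  | succ k ih =>
    rw [mul_add, mul_one, sum_range_succ, sum_range_succ, sum_range_succ, ih, add_assoc]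

theorem two_mul_sum_range_sub_mul_choose_sq (n : ℕ) :
    2 * ∑ r ∈ range (n + 1), ((n : ℤ) - r) * n.choose r ^ 2 = n * (2 * n).choose n := by
  have reflect : ∑ r ∈ range (n + 1), ((n : ℤ) - r) * n.choose r ^ 2
      = ∑ r ∈ range (n + 1), (r : ℤ) * n.choose r ^ 2 := by
    rw [← sum_range_reflect]
    refine sum_congr rfl fun r hr => ?_
    rw [mem_range] at hr
    rw [Nat.add_sub_cancel, Nat.choose_symm (by omega), Nat.cast_sub (by omega)]
    ring
  rw [← Nat.sum_range_choose_sq, two_mul, Nat.cast_sum, mul_sum]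
  nth_rewrite 2 [reflect]
  rw [← sum_add_distrib]
  refine sum_congr rfl fun r _ => ?_
  push_cast; ring

theorem sum_choose_mul_binomAbsDev_mul_binomAbsDev (n : ℕ) :
    ∑ m ∈ range (2 * n + 1),
        ((2 * n).choose m : ℤ) * (binomAbsDev m * binomAbsDev (2 * n - m))
      = 2 * n ^ 2 * (2 * n).choose n ^ 2 := by
  set T : ℕ → ℤ := fun m =>
    ((2 * n).choose m : ℤ) * (binomAbsDev m * binomAbsDev (2 * n - m))
  have pair : ∀ r ∈ range (n + 1), T (2 * r) + T (2 * r + 1)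
      = 4 * n * (2 * n).choose n * (((n : ℤ) - r) * n.choose r ^ 2) := by
    intro r hr
    rw [mem_range, Nat.lt_succ_iff, le_iff_lt_or_eq] at hr
    rcases hr with hr | rfl
    · simp only [T]
      rw [choose_mul_binomAbsDev_mul_binomAbsDev_even hr.le,
        choose_mul_binomAbsDev_mul_binomAbsDev_odd hr]
      ring
    · simp [T, binomAbsDev]
  calc ∑ m ∈ range (2 * n + 1), T m = ∑ m ∈ range (2 * (n + 1)), T m := by
        rw [show 2 * (n + 1) = 2 * n + 1 + 1 by ring, sum_range_succ _ (2 * n + 1)]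
        simp [T]
    _ = 4 * n * (2 * n).choose n * ∑ r ∈ range (n + 1), ((n : ℤ) - r) * n.choose r ^ 2 := by
        rw [sum_range_two_mul, sum_congr rfl pair, mul_sum]
    _ = 2 * n ^ 2 * (2 * n).choose n ^ 2 := by
        linear_combination
          (2 * n * (2 * n).choose n : ℤ) * two_mul_sum_range_sub_mul_choose_sq n

theorem stmt3 (n : ℕ) :
    ∑ᶠ k : ℤ, ∑ᶠ l : ℤ,
        ichoose (2 * n) (n + k) * ichoose (2 * n) (n + l) * |k ^ 2 - l ^ 2|
      = 2 * n ^ 2 * ((2 * n).choose n : ℤ) ^ 2 := by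
  have factor (i j : ℕ) :
      |((i : ℤ) - n) ^ 2 - ((j : ℤ) - n) ^ 2|
        = |(i : ℤ) - j| * |(i : ℤ) + j - (2 * n : ℕ)| := by
    rw [← abs_mul]
    push_cast
    ring_nf
  rw [finsum_finsum_ichoose_add_mul (2 * n) n (fun k l => |k ^ 2 - l ^ 2|)]
  simp only [factor]
  rw [sum_range_choose_mul_choose_mul_abs_sub_mul_abs_add_sub,
    sum_choose_mul_binomAbsDev_mul_binomAbsDev]
end

section
/- For all natural numbers m, n, the double sum over integers k, ℓ of binom(2m, m+k) * binom(2n, n+ℓ) * |k^2 - ℓ^2| is greater than or equal to 2*m*n*binom(2m, m)*binom(2n, n), with equality if and only if m = n. -/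
/-!
Let `u q = ∑_{|k| > q} C(2m, m+k)` (which is `2 * tail m (q + 1)`), `A = 4 ^ m`, `α = m C(2m, m)`,
and `v q`, `B`, `β` the same for `n`. Since `|k² - l²| = ∑_q (2q+1) [exactly one of |k|, |l|
exceeds q]`, the double sum is `S = ∑_q (2q+1) (u q B + A v q - 2 u q v q)`. A telescoping sum
gives `∑_q (2q+1) u q (A - u q) = α²`, and then
`A B (S - 2αβ) = (αB - βA)² + ∑_q (2q+1) (u q B - v q A)²`.
So `S ≥ 2αβ`, with equality iff both squares vanish. As `m C(2m, m) / 4 ^ m` is strictly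
increasing, `αB = βA` forces `m = n`; conversely for `m = n` the right-hand side is zero.
-/

open Finset

namespace BinomialAbsSum

lemma sum_range_two_mul_add_one (n : ℕ) : ∑ q ∈ range n, (2 * q + 1 : ℤ) = (n : ℤ) ^ 2 := by
  induction n with
  | zero => simp
  | succ n ih => rw [sum_range_succ, ih]; push_cast; ring

lemma sum_range_ite_lt {n N : ℕ} (h : n ≤ N) :
    ∑ q ∈ range N, (if q < n then (2 * q + 1 : ℤ) else 0) = (n : ℤ) ^ 2 := by
  rw [← sum_filter, ← sum_range_two_mul_add_one]
  congr 1
  ext q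
  simp only [mem_filter, mem_range]
  omega

lemma abs_sq_sub_sq_eq_sum {a b : ℤ} {N : ℕ} (ha : a.natAbs ≤ N) (hb : b.natAbs ≤ N) :
    |a ^ 2 - b ^ 2| = ∑ q ∈ range N, (2 * q + 1 : ℤ) *
      ((if q < a.natAbs then 1 else 0) + (if q < b.natAbs then 1 else 0)
        - 2 * (if q < a.natAbs then 1 else 0) * (if q < b.natAbs then 1 else 0)) := by
  wlog hab : a.natAbs ≤ b.natAbs generalizing a b
  · rw [abs_sub_comm, this hb ha (by omega)]
    exact sum_congr rfl fun q _ => by ring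
  have hsq : a ^ 2 ≤ b ^ 2 := by
    rw [← Int.natAbs_sq a, ← Int.natAbs_sq b]
    gcongr
  calc |a ^ 2 - b ^ 2| = (b.natAbs : ℤ) ^ 2 - (a.natAbs : ℤ) ^ 2 := by
        rw [abs_of_nonpos (by linarith), Int.natAbs_sq, Int.natAbs_sq]; ring
    _ = _ := by
      rw [← sum_range_ite_lt hb, ← sum_range_ite_lt ha, ← sum_sub_distrib]
      refine sum_congr rfl fun q _ => ?_
      split_ifs <;> omega

theorem sum_sum_mul_abs_sq_sub_sq {ι κ : Type*} (s : Finset ι) (t : Finset κ)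
    (c : ι → ℤ) (d : κ → ℤ) (x : ι → ℤ) (y : κ → ℤ) {N : ℕ}
    (hx : ∀ i ∈ s, (x i).natAbs ≤ N) (hy : ∀ j ∈ t, (y j).natAbs ≤ N) :
    ∑ i ∈ s, ∑ j ∈ t, c i * d j * |x i ^ 2 - y j ^ 2|
      = ∑ q ∈ range N, (2 * q + 1 : ℤ) *
          ((∑ i ∈ s with q < (x i).natAbs, c i) * (∑ j ∈ t, d j)
            + (∑ i ∈ s, c i) * (∑ j ∈ t with q < (y j).natAbs, d j)
            - 2 * (∑ i ∈ s with q < (x i).natAbs, c i) * (∑ j ∈ t with q < (y j).natAbs, d j)) := by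
  calc ∑ i ∈ s, ∑ j ∈ t, c i * d j * |x i ^ 2 - y j ^ 2|
      = ∑ i ∈ s, ∑ j ∈ t, ∑ q ∈ range N, (2 * q + 1 : ℤ) *
          ((if q < (x i).natAbs then c i else 0) * d j
            + c i * (if q < (y j).natAbs then d j else 0)
            - 2 * (if q < (x i).natAbs then c i else 0)
                * (if q < (y j).natAbs then d j else 0)) := by
        refine sum_congr rfl fun i hi => sum_congr rfl fun j hj => ?_
        rw [abs_sq_sub_sq_eq_sum (hx i hi) (hy j hj), mul_sum]
        refine sum_congr rfl fun q _ => ?_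
        split_ifs <;> ring
    _ = _ := by
        rw [sum_congr rfl fun i _ => sum_comm, sum_comm]
        refine sum_congr rfl fun q _ => ?_
        rw [sum_filter, sum_filter, mul_assoc 2, sum_mul_sum, sum_mul_sum, sum_mul_sum, mul_sum,
          ← sum_add_distrib, ← sum_sub_distrib, mul_sum]
        refine sum_congr rfl fun i _ => ?_
        simp only [mul_sum, ← sum_add_distrib, ← sum_sub_distrib]
        exact sum_congr rfl fun j _ => by ring

def tail (m p : ℕ) : ℤ := ∑ i ∈ Ico (m + p) (2 * m + 1), ((2 * m).choose i : ℤ)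

lemma tail_eq_zero {m p : ℕ} (h : m < p) : tail m p = 0 := by
  rw [tail, Ico_eq_empty (by omega), sum_empty]

lemma tail_eq_choose_add_tail_succ (m p : ℕ) :
    tail m p = (2 * m).choose (m + p) + tail m (p + 1) := by
  rcases le_or_gt p m with h | h
  · rw [tail, sum_eq_sum_Ico_succ_bot (by omega), tail, ← add_assoc]
  · rw [tail_eq_zero h, tail_eq_zero (by omega), Nat.choose_eq_zero_of_lt (by omega)]
    simp

lemma succ_mul_choose_add_succ (m p : ℕ) :
    ((m + p + 1 : ℕ) : ℤ) * (2 * m).choose (m + p + 1)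
      = ((m : ℤ) - p) * (2 * m).choose (m + p) := by
  rcases le_or_gt p m with h | h
  · have := Nat.choose_succ_right_eq (2 * m) (m + p)
    rw [show 2 * m - (m + p) = m - p by omega] at this
    have := congrArg (Nat.cast (R := ℤ)) this
    push_cast [Nat.cast_sub h] at this ⊢
    linear_combination this
  · rw [Nat.choose_eq_zero_of_lt (by omega), Nat.choose_eq_zero_of_lt (n := 2 * m) (by omega)]
    simp

lemma sum_range_choose_two_mul (m : ℕ) :
    ∑ i ∈ range (2 * m + 1), ((2 * m).choose i : ℤ) = 4 ^ m := by
  rw [← Nat.cast_sum, Nat.sum_range_choose, pow_mul]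
  norm_num

lemma sum_filter_lt_natAbs_choose (m q : ℕ) :
    ∑ i ∈ range (2 * m + 1) with q < ((i : ℕ) - (m : ℤ)).natAbs, ((2 * m).choose i : ℤ)
      = 2 * tail m (q + 1) := by
  have hsplit : {i ∈ range (2 * m + 1) | q < ((i : ℕ) - (m : ℤ)).natAbs}
      = range (m - q) ∪ Ico (m + (q + 1)) (2 * m + 1) := by
    ext i
    simp only [mem_filter, mem_range, mem_union, mem_Ico]
    omega
  have hlow : ∑ i ∈ range (m - q), ((2 * m).choose i : ℤ) = tail m (q + 1) := by
    refine sum_nbij' (2 * m - ·) (2 * m - ·) ?_ ?_ ?_ ?_ ?_ <;> intro i hi <;>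
      simp only [mem_range, mem_Ico] at hi ⊢ <;> first | omega | rw [Nat.choose_symm (by omega)]
  rw [hsplit, sum_union (disjoint_left.2 fun i hi hi' => by simp at hi hi'; omega), hlow, tail]
  ring

lemma two_mul_tail_one_add_choose (m : ℕ) : 2 * tail m 1 + (2 * m).choose m = 4 ^ m := by
  have hcentre : {i ∈ range (2 * m + 1) | ¬0 < ((i : ℕ) - (m : ℤ)).natAbs} = {m} := by
    ext i
    simp only [mem_filter, mem_range, mem_singleton]
    omega
  rw [← sum_range_choose_two_mul,
    ← sum_filter_add_sum_filter_not _ (fun i : ℕ => 0 < ((i : ℕ) - (m : ℤ)).natAbs),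
    sum_filter_lt_natAbs_choose, hcentre, sum_singleton]

/-- An antidifference of `2m (2p+1) u (4^m - u)`, `u = 2 tail m (p + 1)`, found with the ansatz
`a T (4^m - 2T) + b X (4^m - 4T) + c X²` in `T = tail m (p + 1)`, `X = (m+p+1) C(2m, m+p+1)`.
The variable `X` makes the recursion close: by absorption, `X` at `p + 1` is
`(m-p-1) C(2m, m+p+1)`. -/
def potential (m p : ℕ) : ℤ :=
  m * (2 * m - 4 * p ^ 2) * tail m (p + 1) * (4 ^ m - 2 * tail m (p + 1))
    + m * (2 * p + 1) * (((m + p + 1 : ℕ) : ℤ) * (2 * m).choose (m + p + 1))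
        * (4 ^ m - 4 * tail m (p + 1))
    + (2 * m - 1) * (((m + p + 1 : ℕ) : ℤ) * (2 * m).choose (m + p + 1)) ^ 2

lemma potential_sub_potential_succ (m p : ℕ) :
    potential m p - potential m (p + 1)
      = 2 * m * ((2 * p + 1) * (2 * tail m (p + 1)) * (4 ^ m - 2 * tail m (p + 1))) := by
  have htail : tail m (p + 1 + 1) = tail m (p + 1) - (2 * m).choose (m + (p + 1)) := by
    rw [tail_eq_choose_add_tail_succ m (p + 1)]; ring
  rw [potential, potential, htail, succ_mul_choose_add_succ m (p + 1), ← add_assoc]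
  push_cast
  ring

lemma potential_eq_zero {m p : ℕ} (h : m ≤ p) : potential m p = 0 := by
  rw [potential, tail_eq_zero (by omega), Nat.choose_eq_zero_of_lt (by omega)]
  ring

lemma potential_zero (m : ℕ) : potential m 0 = 2 * m * (m * (2 * m).choose m) ^ 2 := by
  have hX := succ_mul_choose_add_succ m 0
  have hA := two_mul_tail_one_add_choose m
  simp only [add_zero, Nat.cast_zero, sub_zero] at hX
  rw [potential, hX, ← hA]
  push_cast
  ring

theorem sum_tail_mul_compl_eq_sq {m N : ℕ} (hN : m ≤ N) :
    ∑ q ∈ range N, (2 * q + 1 : ℤ) * (2 * tail m (q + 1)) * (4 ^ m - 2 * tail m (q + 1))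
      = (m * (2 * m).choose m) ^ 2 := by
  rcases eq_or_ne m 0 with rfl | hm
  · simp [tail_eq_zero]
  · refine mul_left_cancel₀ (by positivity : (2 * m : ℤ) ≠ 0) ?_
    rw [mul_sum, ← potential_zero, ← sub_zero (potential m 0), ← potential_eq_zero hN,
      ← sum_range_sub']
    exact sum_congr rfl fun q _ => (potential_sub_potential_succ m q).symm

theorem mul_mul_sub_eq_sq_add_sum_sq {R ι : Type*} [CommRing R] (s : Finset ι) (w u v : ι → R)
    {A B α β : R} (hα : ∑ q ∈ s, w q * u q * (A - u q) = α ^ 2)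
    (hβ : ∑ q ∈ s, w q * v q * (B - v q) = β ^ 2) :
    A * B * (∑ q ∈ s, w q * (u q * B + A * v q - 2 * u q * v q) - 2 * α * β)
      = (α * B - β * A) ^ 2 + ∑ q ∈ s, w q * (u q * B - v q * A) ^ 2 := by
  have hsplit : ∑ q ∈ s, w q * (u q * B - v q * A) ^ 2
      = A * B * ∑ q ∈ s, w q * (u q * B + A * v q - 2 * u q * v q)
        - B ^ 2 * ∑ q ∈ s, w q * u q * (A - u q) - A ^ 2 * ∑ q ∈ s, w q * v q * (B - v q) := by
    simp only [mul_sum, ← sum_sub_distrib]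
    exact sum_congr rfl fun q _ => by ring
  rw [hsplit, hα, hβ]
  ring

theorem strictMono_mul_centralBinom_div_four_pow :
    StrictMono fun n : ℕ => (n * n.centralBinom : ℚ) / 4 ^ n := by
  refine strictMono_nat_of_lt_succ fun n => ?_
  have hsucc : ((n + 1 : ℕ) * (n + 1).centralBinom : ℚ) = 2 * (2 * n + 1) * n.centralBinom := by
    exact_mod_cast n.succ_mul_centralBinom_succ
  have hpos : (0 : ℚ) < n.centralBinom * 4 ^ n := by
    have := n.centralBinom_pos
    positivity
  rw [hsucc, div_lt_div_iff₀ (by positivity) (by positivity), pow_succ]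
  nlinarith

theorem mul_choose_mul_four_pow_eq_iff {m n : ℕ} :
    (m * (2 * m).choose m * 4 ^ n : ℤ) = n * (2 * n).choose n * 4 ^ m ↔ m = n := by
  refine ⟨fun h => strictMono_mul_centralBinom_div_four_pow.injective ?_, fun h => h ▸ rfl⟩
  rw [div_eq_div_iff (by positivity) (by positivity)]
  simp only [Nat.centralBinom_eq_two_mul_choose]
  exact_mod_cast h

lemma ichoose_eq_zero {n : ℕ} {k : ℤ} (h : k < 0 ∨ n < k) : ichoose n k = 0 := by
  rw [ichoose]
  split_ifs with hk
  · rw [Nat.choose_eq_zero_of_lt (by omega), Nat.cast_zero]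
  · rfl

lemma finsum_ichoose_mul (m : ℕ) (g : ℤ → ℤ) :
    ∑ᶠ k : ℤ, ichoose (2 * m) (m + k) * g k
      = ∑ i ∈ range (2 * m + 1), ((2 * m).choose i : ℤ) * g (i - m) := by
  rw [finsum_eq_finsetSum_of_support_subset
      (s := (range (2 * m + 1)).image fun i : ℕ => (i : ℤ) - m),
    sum_image fun a _ b _ h => by simpa using h]
  · refine sum_congr rfl fun i _ => ?_
    simp [ichoose]
  · intro k hk
    have hk : 0 ≤ m + k ∧ m + k ≤ 2 * m := by
      by_contra h
      exact hk (show ichoose (2 * m) (m + k) * g k = 0 by rw [ichoose_eq_zero (by omega), zero_mul])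
    simp only [coe_image, Set.mem_image, mem_coe, mem_range]
    exact ⟨(m + k).toNat, by omega, by omega⟩

lemma finsum_finsum_ichoose_mul_abs (m n : ℕ) :
    ∑ᶠ k : ℤ, ∑ᶠ l : ℤ, ichoose (2 * m) (m + k) * ichoose (2 * n) (n + l) * |k ^ 2 - l ^ 2|
      = ∑ i ∈ range (2 * m + 1), ∑ j ∈ range (2 * n + 1), ((2 * m).choose i : ℤ) *
          (2 * n).choose j * |((i : ℤ) - m) ^ 2 - ((j : ℤ) - n) ^ 2| := by
  have hinner (k : ℤ) :
      ∑ᶠ l : ℤ, ichoose (2 * m) (m + k) * ichoose (2 * n) (n + l) * |k ^ 2 - l ^ 2|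
        = ichoose (2 * m) (m + k) *
            ∑ j ∈ range (2 * n + 1), ((2 * n).choose j : ℤ) * |k ^ 2 - ((j : ℤ) - n) ^ 2| := by
    calc _ = ∑ᶠ l : ℤ, ichoose (2 * n) (n + l) * (ichoose (2 * m) (m + k) * |k ^ 2 - l ^ 2|) :=
          finsum_congr fun l => by ring
      _ = _ := by
          rw [finsum_ichoose_mul, mul_sum]
          exact sum_congr rfl fun j _ => by ring
  rw [finsum_congr hinner, finsum_ichoose_mul]
  simp only [mul_sum, mul_assoc]

theorem four_pow_mul_four_pow_mul_sub_eq (m n : ℕ) :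
    (4 ^ m * 4 ^ n : ℤ) *
        ((∑ᶠ k : ℤ, ∑ᶠ l : ℤ, ichoose (2 * m) (m + k) * ichoose (2 * n) (n + l) * |k ^ 2 - l ^ 2|)
          - 2 * (m * (2 * m).choose m) * (n * (2 * n).choose n))
      = (m * (2 * m).choose m * 4 ^ n - n * (2 * n).choose n * 4 ^ m) ^ 2
        + ∑ q ∈ range (max m n), (2 * q + 1 : ℤ) *
            (2 * tail m (q + 1) * 4 ^ n - 2 * tail n (q + 1) * 4 ^ m) ^ 2 := by
  rw [finsum_finsum_ichoose_mul_abs, sum_sum_mul_abs_sq_sub_sq (N := max m n)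
    (x := fun i : ℕ => (i : ℤ) - m) (y := fun j : ℕ => (j : ℤ) - n)
    (hx := fun i hi => by simp only [mem_range] at hi; omega)
    (hy := fun j hj => by simp only [mem_range] at hj; omega)]
  simp only [sum_filter_lt_natAbs_choose, sum_range_choose_two_mul]
  exact mul_mul_sub_eq_sq_add_sum_sq _ (fun q : ℕ => (2 * q + 1 : ℤ))
    (fun q => 2 * tail m (q + 1)) (fun q => 2 * tail n (q + 1))
    (sum_tail_mul_compl_eq_sq (le_max_left m n)) (sum_tail_mul_compl_eq_sq (le_max_right m n))

end BinomialAbsSum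

open BinomialAbsSum

theorem stmt4 (m n : ℕ) :
    (2 * m * n * ((2 * m).choose m : ℤ) * ((2 * n).choose n : ℤ)
        ≤ ∑ᶠ k : ℤ, ∑ᶠ l : ℤ,
            ichoose (2 * m) (m + k) * ichoose (2 * n) (n + l) * |k ^ 2 - l ^ 2|)
      ∧ ((∑ᶠ k : ℤ, ∑ᶠ l : ℤ,
            ichoose (2 * m) (m + k) * ichoose (2 * n) (n + l) * |k ^ 2 - l ^ 2|)
          = 2 * m * n * ((2 * m).choose m : ℤ) * ((2 * n).choose n : ℤ) ↔ m = n) := by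
  have key := four_pow_mul_four_pow_mul_sub_eq m n
  set S := ∑ᶠ k : ℤ, ∑ᶠ l : ℤ, ichoose (2 * m) (m + k) * ichoose (2 * n) (n + l) * |k ^ 2 - l ^ 2|
  have hpos : (0 : ℤ) < 4 ^ m * 4 ^ n := by positivity
  have hsum : 0 ≤ ∑ q ∈ range (max m n), (2 * q + 1 : ℤ) *
      (2 * tail m (q + 1) * 4 ^ n - 2 * tail n (q + 1) * 4 ^ m) ^ 2 :=
    sum_nonneg fun q _ => by positivity
  refine ⟨?_, fun hS => ?_, fun hmn => ?_⟩
  · have := nonneg_of_mul_nonneg_right (key ▸ add_nonneg (sq_nonneg _) hsum) hpos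
    linarith
  · rw [hS] at key
    have hsq := ((add_eq_zero_iff_of_nonneg (sq_nonneg _) hsum).mp (by rw [← key]; ring)).1
    exact mul_choose_mul_four_pow_eq_iff.mp (sub_eq_zero.mp (pow_eq_zero_iff two_ne_zero |>.mp hsq))
  · subst hmn
    have hzero :
        (4 ^ m * 4 ^ m : ℤ) * (S - 2 * (m * (2 * m).choose m) * (m * (2 * m).choose m)) = 0 := by
      rw [key]
      simp
    linear_combination (mul_eq_zero.mp hzero).resolve_left hpos.ne'
end

section
/- For all positive integers n and all integers m with 0 ≤ m ≤ n, the sum over q ≥ 0 of binom(2n, n+m+q) * binom(2n, n+q) * (m+2q) * f_q, where f_q = 1 for q ≠ 0 and f_0 = 1/2, equals (n/2) * binom(2n, n) * binom(2n, n+m). -/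
lemma aux1 (N k : ℕ) (hN : 1 ≤ N) (hk : 1 ≤ k) :
    (k : ℚ) * (N.choose k) = N * ((N - 1).choose (k - 1)) := by
  cases N with
  | zero => omega
  | succ N =>
    cases k with
    | zero => omega
    | succ k =>
      have := congrArg (Nat.cast : ℕ → ℚ) (Nat.add_one_mul_choose_eq N k)
      push_cast [Nat.succ_eq_add_one] at this ⊢
      linear_combination -this

lemma aux2 (N k : ℕ) (hN : 1 ≤ N) :
    ((N : ℚ) - k) * (N.choose k) = N * ((N - 1).choose k) := by
  rcases le_or_gt k N with h | h
  · cases N with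
    | zero => omega
    | succ N =>
      have := congrArg (Nat.cast : ℕ → ℚ) (Nat.choose_mul_succ_eq N k)
      rw [Nat.cast_mul, Nat.cast_mul, Nat.cast_sub (by omega)] at this
      push_cast at this ⊢
      linear_combination -this
  · rw [Nat.choose_eq_zero_of_lt h, Nat.choose_eq_zero_of_lt (by omega)]
    simp

lemma key_term (a M q : ℕ) :
    (((2*a+2).choose (a+1+M+q) : ℚ) * ((2*a+2).choose (a+1+q)) * ((M : ℚ) + 2*q))
      = (2*a+2) * ((((2*a+1).choose (a+M+q) : ℚ) * ((2*a+1).choose (a+q)))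
          - (((2*a+1).choose (a+M+(q+1)) : ℚ) * ((2*a+1).choose (a+(q+1))))) := by
  have h1 := aux1 (2*a+2) (a+1+M+q) (by omega) (by omega)
  rw [show 2*a+2-1 = 2*a+1 by omega, show a+1+M+q-1 = a+M+q by omega] at h1
  have h2 := aux2 (2*a+2) (a+1+q) (by omega)
  rw [show 2*a+2-1 = 2*a+1 by omega] at h2
  have h3 : (((2*a+2).choose (a+1+q)) : ℚ)
      = ((2*a+1).choose (a+q)) + ((2*a+1).choose (a+1+q)) := by
    have := Nat.choose_succ_succ' (2*a+1) (a+q)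
    rw [show a+q+1 = a+1+q by omega] at this
    exact_mod_cast congrArg (Nat.cast : ℕ → ℚ) this
  have h4 : (((2*a+2).choose (a+1+M+q)) : ℚ)
      = ((2*a+1).choose (a+M+q)) + ((2*a+1).choose (a+1+M+q)) := by
    have := Nat.choose_succ_succ' (2*a+1) (a+M+q)
    rw [show a+M+q+1 = a+1+M+q by omega] at this
    exact_mod_cast congrArg (Nat.cast : ℕ → ℚ) this
  rw [show a+M+(q+1) = a+1+M+q by omega, show a+(q+1) = a+1+q by omega]
  push_cast at h1 h2 ⊢
  rw [h4] at h1
  rw [h3] at h2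
  rw [h3, h4]
  linear_combination (((2*a+1).choose (a+q) : ℚ) + ((2*a+1).choose (a+1+q))) * h1
    - (((2*a+1).choose (a+M+q) : ℚ) + ((2*a+1).choose (a+1+M+q))) * h2

lemma key_sum (a M : ℕ) :
    ∑ q ∈ Finset.range (a+2),
        (((2*a+2).choose (a+1+M+q) : ℚ) * ((2*a+2).choose (a+1+q)) * ((M : ℚ) + 2*q))
      = (2*a+2) * (((2*a+1).choose (a+M) : ℚ) * ((2*a+1).choose a)) := by
  have : ∀ q ∈ Finset.range (a+2),
      (((2*a+2).choose (a+1+M+q) : ℚ) * ((2*a+2).choose (a+1+q)) * ((M : ℚ) + 2*q))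
        = (2*a+2) * ((fun q => (((2*a+1).choose (a+M+q) : ℚ) * ((2*a+1).choose (a+q)))) q
            - (fun q => (((2*a+1).choose (a+M+q) : ℚ) * ((2*a+1).choose (a+q)))) (q+1)) :=
    fun q _ => key_term a M q
  rw [Finset.sum_congr rfl this, ← Finset.mul_sum, Finset.sum_range_sub']
  simp [Nat.choose_eq_zero_of_lt (show 2*a+1 < a+(a+2) by omega)]

lemma ichoose_coe (N k : ℕ) : (ichoose N (k : ℤ) : ℚ) = (N.choose k : ℚ) := by
  simp [ichoose]

theorem stmt5 (n : ℕ) (hn : 1 ≤ n) (m : ℤ) (hm0 : 0 ≤ m) (hmn : m ≤ n) :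
    ∑ᶠ q : ℕ, (ichoose (2 * n) (n + m + q) : ℚ) * (ichoose (2 * n) (n + q) : ℚ)
        * (m + 2 * q : ℚ) * (if q = 0 then (1 : ℚ) / 2 else 1)
      = (n : ℚ) / 2 * ((2 * n).choose n : ℚ) * (ichoose (2 * n) (n + m) : ℚ) := by
  lift m to ℕ using hm0 with M
  obtain ⟨a, rfl⟩ : ∃ a, n = a + 1 := ⟨n - 1, by omega⟩
  have hfun : ∀ q : ℕ,
      (ichoose (2 * (a+1)) ((a+1 : ℕ) + (M : ℤ) + q) : ℚ) * (ichoose (2 * (a+1)) ((a+1 : ℕ) + (q : ℤ)) : ℚ)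
        * (((M : ℤ) : ℚ) + 2 * q) * (if q = 0 then (1 : ℚ) / 2 else 1)
      = (((2*a+2).choose (a+1+M+q) : ℚ) * ((2*a+2).choose (a+1+q)) * ((M : ℚ) + 2*q))
          * (if q = 0 then (1 : ℚ) / 2 else 1) := by
    intro q
    push_cast
    rw [show ((a : ℤ) + 1 + (M : ℤ) + q) = ((a+1+M+q : ℕ) : ℤ) by push_cast; ring,
      show ((a : ℤ) + 1 + (q : ℤ)) = ((a+1+q : ℕ) : ℤ) by push_cast; ring,
      show 2 * (a+1) = 2*a+2 by ring, ichoose_coe, ichoose_coe]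
  rw [finsum_congr hfun]
  have hsupp : (Function.support fun q : ℕ =>
      (((2*a+2).choose (a+1+M+q) : ℚ) * ((2*a+2).choose (a+1+q)) * ((M : ℚ) + 2*q))
        * (if q = 0 then (1 : ℚ) / 2 else 1)) ⊆ ↑(Finset.range (a+2)) := by
    intro q hq
    simp only [Finset.coe_range, Set.mem_Iio]
    by_contra h
    apply hq
    have : (2*a+2).choose (a+1+q) = 0 := Nat.choose_eq_zero_of_lt (by omega)
    simp [this]
  rw [finsum_eq_sum_of_support_subset _ hsupp,
    show ((a+1 : ℕ) : ℤ) + ((M : ℕ) : ℤ) = ((a+1+M : ℕ) : ℤ) by push_cast; ring,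
    show 2*(a+1) = 2*a+2 by ring, ichoose_coe]
  have hks := key_sum a M
  rw [Finset.sum_range_succ'] at hks ⊢
  simp only [Nat.succ_ne_zero, ite_false, ite_true, mul_one, Nat.add_zero, Nat.cast_zero,
    mul_zero, add_zero, if_neg (Nat.succ_ne_zero _), if_pos rfl] at hks ⊢
  have hA := aux1 (2*a+2) (a+1+M) (by omega) (by omega)
  rw [show 2*a+2-1 = 2*a+1 by omega, show a+1+M-1 = a+M by omega] at hA
  have hB := aux1 (2*a+2) (a+1) (by omega) (by omega)
  rw [show 2*a+2-1 = 2*a+1 by omega, show a+1-1 = a by omega] at hB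
  have hY : (((2*a+2).choose (a+1)) : ℚ) = 2 * ((2*a+1).choose a) := by
    have hpos : ((a : ℚ) + 1) ≠ 0 := by positivity
    apply mul_left_cancel₀ hpos
    push_cast at hB ⊢
    linear_combination hB
  rw [hY] at hks ⊢
  push_cast at hks hA ⊢
  linear_combination hks - ((2*a+1).choose a : ℚ) * hA
end

section
/- For all integers n, m, q with n ≥ 1, the identity [(m+2q)^4 - 2(4n^2+m^2)(m+2q)^2 + (4n^2-m^2)^2] * binom(2n, n+m+q) * binom(2n, n+q) = 64 n^2 (2n-1)^2 * binom(2n-2, n-1+m+q) * binom(2n-2, n-1+q) holds. -/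
/-- Binomial coefficient with both indices integers, vanishing unless `0 ≤ b ≤ a`. -/
def zchoose (a b : ℤ) : ℤ :=
  if 0 ≤ b ∧ b ≤ a then (a.toNat.choose b.toNat : ℤ) else 0

lemma natkey (N' k' : ℕ) (hk : k' ≤ N') :
    (k' + 1) * (N' + 1 - k') * (N' + 2).choose (k' + 1)
      = (N' + 2) * ((N' + 1) * N'.choose k') := by
  have h1 : (N' + 2) * (N' + 1).choose k' = (N' + 2).choose (k' + 1) * (k' + 1) :=
    Nat.add_one_mul_choose_eq (N' + 1) k'
  have h2 : N'.choose k' * (N' + 1) = (N' + 1).choose k' * (N' + 1 - k') :=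
    Nat.choose_mul_succ_eq N' k'
  calc (k' + 1) * (N' + 1 - k') * (N' + 2).choose (k' + 1)
      = (N' + 1 - k') * ((N' + 2).choose (k' + 1) * (k' + 1)) := by ring
    _ = (N' + 1 - k') * ((N' + 2) * (N' + 1).choose k') := by rw [h1]
    _ = (N' + 2) * ((N' + 1).choose k' * (N' + 1 - k')) := by ring
    _ = (N' + 2) * (N'.choose k' * (N' + 1)) := by rw [h2]
    _ = (N' + 2) * ((N' + 1) * N'.choose k') := by ring

lemma key_s7 (n a : ℤ) (hn : 1 ≤ n) :
    a * (2 * n - a) * zchoose (2 * n) a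
      = 2 * n * (2 * n - 1) * zchoose (2 * n - 2) (a - 1) := by
  unfold zchoose
  by_cases h1 : 1 ≤ a ∧ a ≤ 2 * n - 1
  · rw [if_pos ⟨by omega, by omega⟩, if_pos ⟨by omega, by omega⟩]
    obtain ⟨k', hk'⟩ : ∃ k', a.toNat = k' + 1 := ⟨a.toNat - 1, by omega⟩
    obtain ⟨N', hN'⟩ : ∃ N', (2 * n).toNat = N' + 2 := ⟨(2 * n).toNat - 2, by omega⟩
    have hkN : k' ≤ N' := by omega
    have e1 : (2 * n - 2).toNat = N' := by omega
    have e2 : (a - 1).toNat = k' := by omega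
    have ea : a = (k' : ℤ) + 1 := by omega
    have en : 2 * n = (N' : ℤ) + 2 := by omega
    rw [hk', hN', e1, e2, ea, en]
    have := natkey N' k' hkN
    have hsub : ((N' + 1 - k' : ℕ) : ℤ) = (N' : ℤ) + 1 - k' := by
      push_cast [Nat.cast_sub (by omega : k' ≤ N' + 1)]; ring
    have := congrArg (fun x : ℕ => (x : ℤ)) this
    push_cast [hsub] at this
    linear_combination this
  · by_cases h2 : 0 ≤ a ∧ a ≤ 2 * n
    · have : a = 0 ∨ a = 2 * n := by omega
      rcases this with h | h <;> subst h
      · rw [if_neg (show ¬(0 ≤ (0:ℤ) - 1 ∧ (0:ℤ) - 1 ≤ 2 * n - 2) by omega)]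
        ring
      · rw [if_neg (show ¬(0 ≤ 2 * n - 1 ∧ 2 * n - 1 ≤ 2 * n - 2) by omega)]
        ring
    · rw [if_neg h2, if_neg (by omega)]
      ring

theorem stmt7 (n m q : ℤ) (hn : 1 ≤ n) :
    ((m + 2 * q) ^ 4 - 2 * (4 * n ^ 2 + m ^ 2) * (m + 2 * q) ^ 2
        + (4 * n ^ 2 - m ^ 2) ^ 2)
      * zchoose (2 * n) (n + m + q) * zchoose (2 * n) (n + q)
    = 64 * n ^ 2 * (2 * n - 1) ^ 2
      * zchoose (2 * n - 2) (n - 1 + m + q) * zchoose (2 * n - 2) (n - 1 + q) := by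
  have r1 : n - 1 + m + q = n + m + q - 1 := by ring
  have r2 : n - 1 + q = n + q - 1 := by ring
  rw [r1, r2]
  have h1 := key_s7 n (n + m + q) hn
  have h2 := key_s7 n (n + q) hn
  linear_combination
    (16 * (n + q) * (2 * n - (n + q)) * zchoose (2 * n) (n + q)) * h1
    + (16 * (2 * n * (2 * n - 1)) * zchoose (2 * n - 2) (n + m + q - 1)) * h2
end

section
/- For all positive integers n, the double sum over integers i, j of binom(2n, n+i) * binom(2n, n+j) * |i^2 * j^2 * (i^2 - j^2)| equals (2 n^4 (n-1) / (2n-1)) * binom(2n, n)^2. -/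
/-!
The summand is even in `i` and in `j` and vanishes on the axes, so only `i, j ≥ 1` matter, and there
`|i²j²(i² - j²)| = i²j²(i + j)(i + j - 2 min(i, j))`. Counting `min(i, j)` as the number of `l ≥ 1`
with `l ≤ i` and `l ≤ j` turns the double sum into moments of `c_k = C(2n, n + k)` minus a sum over `l`
of products of the tails `∑_{k ≥ l} k³ c_k` and `∑_{k ≥ l} k² c_k`. Since `c_k = b_k + b_{k+1}` with
`b_k = C(2n - 1, n + k - 1)` and `(n + k) b_{k+1} = (n - k) b_k`, both tails telescope, the second up to
`n ∑_{k ≥ l} b_k`. The leftover sum of `b_l` against its own tails is symmetrised by the same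
`min` device and, through `b_k = a_k + a_{k+1}` with `a_k = C(2n - 2, n + k - 2)`, collapses to
`(2n - 1) (∑ a_k)²`. The full sums `∑ b_k` and `∑ a_k` then cancel, and only `b_1 = C(2n, n) / 2` is left.
-/

open Finset

namespace BinomAbsSum

theorem sum_Icc_eq_of_eq_sub {m n : ℕ} {f g : ℕ → ℚ} (hmn : m ≤ n + 1)
    (h : ∀ k ∈ Icc m n, f k = g k - g (k + 1)) (htop : g (n + 1) = 0) :
    ∑ k ∈ Icc m n, f k = g m := by
  rw [sum_congr rfl h, ← Ico_add_one_right_eq_Icc, ← sub_zero (g m), ← htop, ← neg_sub,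
    ← sum_Ico_sub g hmn, ← sum_neg_distrib]
  simp

section DoubleSums

variable (n : ℕ)

theorem sum_Icc_eq_sum_ite {l : ℕ} (hl : 1 ≤ l) (f : ℕ → ℚ) :
    ∑ i ∈ Icc l n, f i = ∑ i ∈ Icc 1 n, if l ≤ i then f i else 0 := by
  rw [← sum_filter]
  congr 1
  ext i
  simp only [mem_Icc, mem_filter]
  omega

theorem two_mul_sum_triangle (g : ℕ → ℕ → ℚ) :
    2 * ∑ m ∈ Icc 1 n, ∑ k ∈ Icc m n, g m k
      = ∑ m ∈ Icc 1 n, ∑ k ∈ Icc 1 n, g (min m k) (max m k) + ∑ m ∈ Icc 1 n, g m m := by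
  have htri : ∑ m ∈ Icc 1 n, ∑ k ∈ Icc m n, g m k
      = ∑ m ∈ Icc 1 n, ∑ k ∈ Icc 1 n, if m ≤ k then g m k else 0 :=
    sum_congr rfl fun m hm => sum_Icc_eq_sum_ite n (mem_Icc.1 hm).1 _
  have hdiag : ∑ m ∈ Icc 1 n, g m m
      = ∑ m ∈ Icc 1 n, ∑ k ∈ Icc 1 n, if m = k then g m k else 0 :=
    sum_congr rfl fun m hm => by rw [sum_ite_eq, if_pos hm]
  rw [two_mul, htri]
  nth_rw 2 [sum_comm]
  rw [hdiag, ← sum_add_distrib, ← sum_add_distrib]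
  refine sum_congr rfl fun m _ => ?_
  rw [← sum_add_distrib, ← sum_add_distrib]
  refine sum_congr rfl fun k _ => ?_
  rcases lt_trichotomy m k with h | rfl | h
  · simp [h.le, h.not_ge, h.ne]
  · simp
  · simp [h.le, h.not_ge, h.ne']

theorem sum_mul_min_eq_sum_tails (f : ℕ → ℕ → ℚ) :
    ∑ i ∈ Icc 1 n, ∑ j ∈ Icc 1 n, f i j * (min i j : ℕ)
      = ∑ l ∈ Icc 1 n, ∑ i ∈ Icc l n, ∑ j ∈ Icc l n, f i j := by
  have hcount : ∀ i ∈ Icc 1 n, ∀ j ∈ Icc 1 n,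
      f i j * (min i j : ℕ) = ∑ l ∈ Icc 1 n, if l ≤ min i j then f i j else 0 := by
    intro i hi j hj
    have hfilter : (Icc 1 n).filter (· ≤ min i j) = Icc 1 (min i j) := by
      ext l
      simp only [mem_filter, mem_Icc] at hi hj ⊢
      omega
    rw [← sum_filter, hfilter, sum_const, Nat.card_Icc, nsmul_eq_mul, mul_comm]
    simp
  calc ∑ i ∈ Icc 1 n, ∑ j ∈ Icc 1 n, f i j * (min i j : ℕ)
      = ∑ i ∈ Icc 1 n, ∑ j ∈ Icc 1 n, ∑ l ∈ Icc 1 n, if l ≤ min i j then f i j else 0 :=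
        sum_congr rfl fun i hi => sum_congr rfl fun j hj => hcount i hi j hj
    _ = ∑ l ∈ Icc 1 n, ∑ i ∈ Icc 1 n, ∑ j ∈ Icc 1 n, if l ≤ min i j then f i j else 0 :=
        (sum_congr rfl fun _ _ => sum_comm).trans sum_comm
    _ = ∑ l ∈ Icc 1 n, ∑ i ∈ Icc l n, ∑ j ∈ Icc l n, f i j := by
        refine sum_congr rfl fun l hl => ?_
        rw [sum_Icc_eq_sum_ite n (mem_Icc.1 hl).1]
        refine sum_congr rfl fun i _ => ?_
        rw [sum_Icc_eq_sum_ite n (mem_Icc.1 hl).1]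
        by_cases hli : l ≤ i <;> simp [hli]

theorem sum_sum_add_sub_one_mul (s : Finset ℕ) (x : ℕ → ℚ) :
    ∑ m ∈ s, ∑ k ∈ s, ((m : ℚ) + k - 1) * x m * x k
      = (∑ m ∈ s, (2 * (m : ℚ) - 1) * x m) * ∑ k ∈ s, x k := by
  have hswap : ∑ m ∈ s, ∑ k ∈ s, (k : ℚ) * x m * x k = ∑ m ∈ s, ∑ k ∈ s, (m : ℚ) * x m * x k := by
    rw [sum_comm]
    exact sum_congr rfl fun _ _ => sum_congr rfl fun _ _ => by ring
  calc ∑ m ∈ s, ∑ k ∈ s, ((m : ℚ) + k - 1) * x m * x k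
      = ∑ m ∈ s, ∑ k ∈ s, (2 * (m : ℚ) - 1) * x m * x k
        + (∑ m ∈ s, ∑ k ∈ s, (k : ℚ) * x m * x k - ∑ m ∈ s, ∑ k ∈ s, (m : ℚ) * x m * x k) := by
        simp only [← sum_sub_distrib, ← sum_add_distrib]
        exact sum_congr rfl fun _ _ => sum_congr rfl fun _ _ => by ring
    _ = _ := by rw [hswap, sub_self, add_zero, sum_mul_sum]

theorem sum_mul_two_mul_tail_sub (x : ℕ → ℚ) :
    ∑ l ∈ Icc 1 n, x l * (2 * ∑ k ∈ Icc l n, x k - x l) = (∑ k ∈ Icc 1 n, x k) ^ 2 := by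
  have h := two_mul_sum_triangle n fun l k => x l * x k
  have hsym : ∀ l k, x (min l k) * x (max l k) = x l * x k := fun l k => by
    rcases le_total l k with h | h <;> simp [h, mul_comm]
  simp only [hsym, ← mul_sum, ← sum_mul] at h
  simp only [mul_sub, sum_sub_distrib, mul_left_comm _ (2 : ℚ), ← mul_sum]
  linear_combination h

theorem two_mul_sum_mul_tail (x : ℕ → ℚ) (r : ℚ) :
    2 * ∑ m ∈ Icc 1 n, ((m : ℚ) ^ 2 - m + r) * x m * ∑ k ∈ Icc m n, x k
      = r * (∑ k ∈ Icc 1 n, x k) ^ 2 - (∑ k ∈ Icc 1 n, (k : ℚ) * x k) ^ 2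
        + ∑ l ∈ Icc 1 n, (∑ k ∈ Icc l n, (2 * (k : ℚ) - 1) * x k) * ∑ k ∈ Icc l n, x k
        + ∑ m ∈ Icc 1 n, ((m : ℚ) ^ 2 - m + r) * x m ^ 2 := by
  have h := two_mul_sum_triangle n fun m k => ((m : ℚ) ^ 2 - m + r) * x m * x k
  have hmin : ∀ m k : ℕ, ((min m k : ℕ) ^ 2 - (min m k : ℕ) + r) * x (min m k) * x (max m k)
      = (r - m * k) * x m * x k + ((m + k - 1) * x m * x k) * (min m k : ℕ) := fun m k => by
    rcases le_total m k with h | h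
    · simp only [min_eq_left h, max_eq_right h]; ring
    · simp only [min_eq_right h, max_eq_left h]; ring
  simp only [hmin, sum_add_distrib, sum_mul_min_eq_sum_tails, sum_sum_add_sub_one_mul] at h
  have hsq : ∑ m ∈ Icc 1 n, ∑ k ∈ Icc 1 n, (r - m * k) * x m * x k
      = r * (∑ k ∈ Icc 1 n, x k) ^ 2 - (∑ k ∈ Icc 1 n, (k : ℚ) * x k) ^ 2 := by
    rw [sq, sq, sum_mul_sum, sum_mul_sum, mul_sum, ← sum_sub_distrib]
    refine sum_congr rfl fun _ _ => ?_
    rw [mul_sum, ← sum_sub_distrib]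
    exact sum_congr rfl fun _ _ => by ring
  have hdiag : ∑ m ∈ Icc 1 n, ((m : ℚ) ^ 2 - m + r) * x m * x m
      = ∑ m ∈ Icc 1 n, ((m : ℚ) ^ 2 - m + r) * x m ^ 2 :=
    sum_congr rfl fun _ _ => by ring
  have hrow : ∑ m ∈ Icc 1 n, ((m : ℚ) ^ 2 - m + r) * x m * ∑ k ∈ Icc m n, x k
      = ∑ m ∈ Icc 1 n, ∑ k ∈ Icc m n, ((m : ℚ) ^ 2 - m + r) * x m * x k :=
    sum_congr rfl fun _ _ => mul_sum _ _ _
  rw [hrow, h, hsq, hdiag]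

theorem abs_sq_mul_sq_mul_sq_sub_sq (i j : ℕ) :
    |(i : ℚ) ^ 2 * (j : ℚ) ^ 2 * ((i : ℚ) ^ 2 - (j : ℚ) ^ 2)|
      = (i : ℚ) ^ 2 * (j : ℚ) ^ 2 * (i + j) * (i + j - 2 * (min i j : ℕ)) := by
  rcases le_total i j with h | h
  · have hq : (i : ℚ) ≤ j := by exact_mod_cast h
    rw [abs_of_nonpos (mul_nonpos_of_nonneg_of_nonpos (by positivity)
      (sub_nonpos.2 (pow_le_pow_left₀ (Nat.cast_nonneg _) hq 2))), min_eq_left h]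
    ring
  · have hq : (j : ℚ) ≤ i := by exact_mod_cast h
    rw [abs_of_nonneg (mul_nonneg (by positivity)
      (sub_nonneg.2 (pow_le_pow_left₀ (Nat.cast_nonneg _) hq 2))), min_eq_right h]
    ring

theorem sum_mul_abs_sq_mul_sq_mul_sq_sub_sq (f : ℕ → ℚ) :
    ∑ i ∈ Icc 1 n, ∑ j ∈ Icc 1 n,
        f i * f j * |(i : ℚ) ^ 2 * (j : ℚ) ^ 2 * ((i : ℚ) ^ 2 - (j : ℚ) ^ 2)|
      = 2 * (∑ k ∈ Icc 1 n, (k : ℚ) ^ 4 * f k) * (∑ k ∈ Icc 1 n, (k : ℚ) ^ 2 * f k)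
        + 2 * (∑ k ∈ Icc 1 n, (k : ℚ) ^ 3 * f k) ^ 2
        - 4 * ∑ l ∈ Icc 1 n,
            (∑ k ∈ Icc l n, (k : ℚ) ^ 3 * f k) * (∑ k ∈ Icc l n, (k : ℚ) ^ 2 * f k) := by
  have hsplit : ∀ i j : ℕ, f i * f j * |(i : ℚ) ^ 2 * (j : ℚ) ^ 2 * ((i : ℚ) ^ 2 - (j : ℚ) ^ 2)|
      = ((i : ℚ) ^ 4 * f i) * ((j : ℚ) ^ 2 * f j) + 2 * (((i : ℚ) ^ 3 * f i) * ((j : ℚ) ^ 3 * f j))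
        + ((i : ℚ) ^ 2 * f i) * ((j : ℚ) ^ 4 * f j)
        - 2 * ((((i : ℚ) ^ 3 * f i) * ((j : ℚ) ^ 2 * f j)
          + ((i : ℚ) ^ 2 * f i) * ((j : ℚ) ^ 3 * f j)) * (min i j : ℕ)) := fun i j => by
    rw [abs_sq_mul_sq_mul_sq_sub_sq]
    ring
  simp only [hsplit, sum_sub_distrib, sum_add_distrib, ← mul_sum, sum_mul_min_eq_sum_tails,
    ← sum_mul, mul_comm (∑ k ∈ Icc _ n, (k : ℚ) ^ 2 * f k)]
  ring

end DoubleSums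

/- Rows `2n`, `2n - 1` and `2n - 2` of Pascal's triangle, centred so that `c_k = b_k + b_{k+1}` and
`b_k = a_k + a_{k+1}`; the truncated subtractions are harmless for `n, k ≥ 1`. -/
def c (n k : ℕ) : ℚ := (2 * n).choose (n + k)

def b (n k : ℕ) : ℚ := (2 * n - 1).choose (n + k - 1)

def a (n k : ℕ) : ℚ := (2 * n - 2).choose (n + k - 2)

section Recurrences

variable {n k : ℕ}

theorem c_eq_b_add_b (hn : 1 ≤ n) : c n k = b n k + b n (k + 1) := by
  have h := Nat.choose_succ_succ' (2 * n - 1) (n + k - 1)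
  rw [Nat.sub_add_cancel (by omega : 1 ≤ 2 * n), Nat.sub_add_cancel (by omega : 1 ≤ n + k)] at h
  rw [c, b, b, h, show n + (k + 1) - 1 = n + k by omega]
  push_cast
  rfl

theorem b_eq_a_add_a (hn : 1 ≤ n) (hk : 1 ≤ k) : b n k = a n k + a n (k + 1) := by
  have h := Nat.choose_succ_succ' (2 * n - 2) (n + k - 2)
  rw [show 2 * n - 2 + 1 = 2 * n - 1 by omega, show n + k - 2 + 1 = n + k - 1 by omega] at h
  rw [b, a, a, h, show n + (k + 1) - 2 = n + k - 1 by omega]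
  push_cast
  rfl

theorem add_mul_b_succ (hn : 1 ≤ n) (hk : k ≤ n) :
    ((n : ℚ) + k) * b n (k + 1) = ((n : ℚ) - k) * b n k := by
  have h := Nat.choose_succ_right_eq (2 * n - 1) (n + k - 1)
  rw [Nat.sub_add_cancel (by omega : 1 ≤ n + k), show 2 * n - 1 - (n + k - 1) = n - k by omega] at h
  rw [b, b, show n + (k + 1) - 1 = n + k by omega]
  have hq := congrArg (Nat.cast : ℕ → ℚ) h
  push_cast [Nat.cast_sub hk] at hq
  linear_combination hq

theorem two_mul_sub_one_mul_a (hn : 1 ≤ n) (hk : 1 ≤ k) :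
    (2 * (n : ℚ) - 1) * a n k = ((n : ℚ) + k - 1) * b n k := by
  have h := Nat.add_one_mul_choose_eq (2 * n - 2) (n + k - 2)
  rw [show 2 * n - 2 + 1 = 2 * n - 1 by omega, show n + k - 2 + 1 = n + k - 1 by omega] at h
  rw [a, b]
  have := congrArg (fun x : ℕ => (x : ℚ)) h
  push_cast [show 1 ≤ 2 * n by omega, show 1 ≤ n + k by omega] at this
  linear_combination this

theorem b_top (hn : 1 ≤ n) : b n (n + 1) = 0 := by
  rw [b, Nat.choose_eq_zero_of_lt (by omega), Nat.cast_zero]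

theorem a_top (hn : 1 ≤ n) : a n (n + 1) = 0 := by
  rw [a, Nat.choose_eq_zero_of_lt (by omega), Nat.cast_zero]

theorem choose_central_eq (hn : 1 ≤ n) : ((2 * n).choose n : ℚ) = 2 * b n 1 := by
  have h := c_eq_b_add_b (k := 0) hn
  have hsymm : b n 0 = b n 1 := by
    rw [b, b, ← Nat.choose_symm (by omega)]
    congr 2
    omega
  rw [c, add_zero] at h
  rw [h, hsymm]
  ring

end Recurrences

section Tails

variable {n m : ℕ}

theorem sum_pow_three_mul_c (hn : 1 ≤ n) (hmn : m ≤ n + 1) :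
    ∑ k ∈ Icc m n, (k : ℚ) ^ 3 * c n k = n * ((m : ℚ) ^ 2 - m + n) * b n m := by
  refine sum_Icc_eq_of_eq_sub (g := fun k => n * ((k : ℚ) ^ 2 - k + n) * b n k) hmn
    (fun k hk => ?_) (by simp [b_top hn])
  rw [c_eq_b_add_b hn]
  push_cast
  linear_combination ((k : ℚ) ^ 2 + n) * add_mul_b_succ hn (mem_Icc.1 hk).2

theorem sum_sq_mul_c (hn : 1 ≤ n) (hmn : m ≤ n + 1) :
    ∑ k ∈ Icc m n, (k : ℚ) ^ 2 * c n k = n * ((m : ℚ) - 1) * b n m + n * ∑ k ∈ Icc m n, b n k := by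
  have h : ∑ k ∈ Icc m n, ((k : ℚ) ^ 2 * c n k - n * b n k) = n * ((m : ℚ) - 1) * b n m := by
    refine sum_Icc_eq_of_eq_sub (g := fun k => n * ((k : ℚ) - 1) * b n k) hmn
      (fun k hk => ?_) (by simp [b_top hn])
    rw [c_eq_b_add_b hn]
    push_cast
    linear_combination (k : ℚ) * add_mul_b_succ hn (mem_Icc.1 hk).2
  rw [sum_sub_distrib, ← mul_sum] at h
  linear_combination h

theorem sum_two_mul_sub_one_mul_b (hn : 1 ≤ n) (hmn : m ≤ n + 1) :
    ∑ k ∈ Icc m n, (2 * (k : ℚ) - 1) * b n k = ((n : ℚ) + m - 1) * b n m := by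
  refine sum_Icc_eq_of_eq_sub (g := fun k => ((n : ℚ) + k - 1) * b n k) hmn
    (fun k hk => ?_) (by simp [b_top hn])
  push_cast
  linear_combination add_mul_b_succ hn (mem_Icc.1 hk).2

theorem sum_b_eq_two_mul_sum_a_sub (hn : 1 ≤ n) (hm : 1 ≤ m) (hmn : m ≤ n + 1) :
    ∑ k ∈ Icc m n, b n k = 2 * ∑ k ∈ Icc m n, a n k - a n m := by
  have h : ∑ k ∈ Icc m n, (b n k - 2 * a n k) = - a n m := by
    refine sum_Icc_eq_of_eq_sub (g := fun k => - a n k) hmn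
      (fun k hk => ?_) (by simp [a_top hn])
    rw [b_eq_a_add_a hn (hm.trans (mem_Icc.1 hk).1)]
    ring
  rw [sum_sub_distrib, ← mul_sum] at h
  linear_combination h

theorem sum_mul_tails_c (hn : 1 ≤ n) :
    ∑ l ∈ Icc 1 n, (∑ k ∈ Icc l n, (k : ℚ) ^ 3 * c n k) * (∑ k ∈ Icc l n, (k : ℚ) ^ 2 * c n k)
      = n ^ 2 * (∑ l ∈ Icc 1 n, ((l : ℚ) ^ 2 - l + n) * ((l : ℚ) - 1) * b n l ^ 2
        + ∑ l ∈ Icc 1 n, ((l : ℚ) ^ 2 - l + n) * b n l * ∑ k ∈ Icc l n, b n k) := by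
  rw [← sum_add_distrib, mul_sum]
  refine sum_congr rfl fun l hl => ?_
  have hln : l ≤ n + 1 := by have := (mem_Icc.1 hl).2; omega
  rw [sum_pow_three_mul_c hn hln, sum_sq_mul_c hn hln]
  ring

theorem sum_mul_tails_b (hn : 1 ≤ n) :
    ∑ l ∈ Icc 1 n, (∑ k ∈ Icc l n, (2 * (k : ℚ) - 1) * b n k) * ∑ k ∈ Icc l n, b n k
      = (2 * n - 1) * (∑ k ∈ Icc 1 n, a n k) ^ 2 := by
  rw [← sum_mul_two_mul_tail_sub, mul_sum]
  refine sum_congr rfl fun l hl => ?_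
  have hl1 := (mem_Icc.1 hl).1
  have hln : l ≤ n + 1 := by have := (mem_Icc.1 hl).2; omega
  rw [sum_two_mul_sub_one_mul_b hn hln, sum_b_eq_two_mul_sum_a_sub hn hl1 hln]
  linear_combination (-(2 * ∑ k ∈ Icc l n, a n k - a n l)) * two_mul_sub_one_mul_a hn hl1

end Tails

section Totals

variable {n : ℕ}

theorem two_mul_sum_pow_four_mul_c (hn : 1 ≤ n) :
    2 * ∑ k ∈ Icc 1 n, (k : ℚ) ^ 4 * c n k = n * (3 * n - 1) * ∑ k ∈ Icc 1 n, b n k := by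
  have h : ∑ k ∈ Icc 1 n, (2 * ((k : ℚ) ^ 4 * c n k) - n * (3 * n - 1) * b n k) = 0 := by
    refine (sum_Icc_eq_of_eq_sub
      (g := fun k => n * ((k : ℚ) - 1) * (((k : ℚ) - 1) * (2 * k + 1) + 3 * n) * b n k)
      (by omega) (fun k hk => ?_) (by simp [b_top hn])).trans (by simp)
    rw [c_eq_b_add_b hn]
    push_cast
    linear_combination (2 * (k : ℚ) ^ 3 + 3 * n * k) * add_mul_b_succ hn (mem_Icc.1 hk).2
  rw [sum_sub_distrib, ← mul_sum, ← mul_sum] at h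
  linear_combination h

theorem sum_mul_b_sq (hn : 1 ≤ n) :
    2 * (2 * (n : ℚ) - 1) * ∑ k ∈ Icc 1 n, ((k : ℚ) ^ 2 - k + n) * (2 * k - 1) * b n k ^ 2
      = n ^ 2 * (3 * n - 1) * b n 1 ^ 2 := by
  rcases hn.eq_or_lt with rfl | hn2
  · simp [b]
    norm_num
  -- The antiderivative below has a pole at `n = 1` once the factor `n - 1` is divided out.
  have h : ∑ k ∈ Icc 1 n,
      2 * (2 * (n : ℚ) - 1) * (n - 1) * (((k : ℚ) ^ 2 - k + n) * (2 * k - 1) * b n k ^ 2)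
      = (n - 1) * (n ^ 2 * (3 * n - 1) * b n 1 ^ 2) := by
    refine (sum_Icc_eq_of_eq_sub (g := fun k => ((n : ℚ) + k - 1) ^ 2
        * ((2 * n - 1) * ((k : ℚ) - 1) ^ 2 + (n - 1) * (3 * n - 1)) * b n k ^ 2)
      (by omega) (fun k hk => ?_) (by simp [b_top hn])).trans (by ring)
    have hrec := add_mul_b_succ hn (mem_Icc.1 hk).2
    push_cast
    linear_combination ((2 * (n : ℚ) - 1) * k ^ 2 + (n - 1) * (3 * n - 1))
      * (((n : ℚ) + k) * b n (k + 1) + (n - k) * b n k) * hrec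
  rw [← mul_sum] at h
  have hn1 : (n : ℚ) - 1 ≠ 0 := sub_ne_zero.2 (by exact_mod_cast hn2.ne')
  exact mul_left_cancel₀ hn1 (by linear_combination h)

theorem two_mul_sub_one_mul_sum_abs (hn : 1 ≤ n) :
    (2 * (n : ℚ) - 1) * ∑ i ∈ Icc 1 n, ∑ j ∈ Icc 1 n,
        c n i * c n j * |(i : ℚ) ^ 2 * (j : ℚ) ^ 2 * ((i : ℚ) ^ 2 - (j : ℚ) ^ 2)|
      = 2 * n ^ 4 * (n - 1) * b n 1 ^ 2 := by
  have hcross := two_mul_sum_mul_tail n (b n) n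
  rw [sum_mul_tails_b hn] at hcross
  have hM2 := sum_sq_mul_c hn (m := 1) (by omega)
  have hM3 := sum_pow_three_mul_c hn (m := 1) (by omega)
  have hM4 := two_mul_sum_pow_four_mul_c hn
  have hodd := sum_two_mul_sub_one_mul_b hn (m := 1) (by omega)
  rw [show ∑ k ∈ Icc 1 n, (2 * (k : ℚ) - 1) * b n k
      = 2 * ∑ k ∈ Icc 1 n, (k : ℚ) * b n k - ∑ k ∈ Icc 1 n, b n k by
    rw [mul_sum, ← sum_sub_distrib]; exact sum_congr rfl fun _ _ => by ring] at hodd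
  have hba := sum_b_eq_two_mul_sum_a_sub hn (m := 1) le_rfl (by omega)
  have ha1 := two_mul_sub_one_mul_a hn (k := 1) le_rfl
  have hsq := sum_mul_b_sq hn
  rw [show ∑ k ∈ Icc 1 n, ((k : ℚ) ^ 2 - k + n) * (2 * k - 1) * b n k ^ 2
      = 2 * ∑ k ∈ Icc 1 n, ((k : ℚ) ^ 2 - k + n) * ((k : ℚ) - 1) * b n k ^ 2
        + ∑ k ∈ Icc 1 n, ((k : ℚ) ^ 2 - k + n) * b n k ^ 2 by
    rw [mul_sum, ← sum_add_distrib]; exact sum_congr rfl fun _ _ => by ring] at hsq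
  rw [sum_mul_abs_sq_mul_sq_mul_sq_sub_sq, sum_mul_tails_c hn, hM2, hM3]
  set B := ∑ k ∈ Icc 1 n, b n k
  set I := ∑ k ∈ Icc 1 n, (k : ℚ) * b n k
  set A := ∑ k ∈ Icc 1 n, a n k
  push_cast at *
  -- The coefficients of `hodd` and `ha1 - (2n - 1) hba` expand `I²` and `A²` by means of
  -- `2 I = B + n b₁` and `2 (2n - 1) A = (2n - 1) B + n b₁`.
  linear_combination (2 * (n : ℚ) - 1) * n * B * hM4 - 2 * (n : ℚ) ^ 2 * (2 * n - 1) * hcross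
    - (n : ℚ) ^ 2 * hsq + (n : ℚ) ^ 2 * (2 * n - 1) / 2 * (2 * I + B + n * b n 1) * hodd
    - (n : ℚ) ^ 2 / 2 * ((2 * n - 1) * B + n * b n 1 + 2 * (2 * n - 1) * A)
      * (ha1 - (2 * n - 1) * hba)

end Totals

theorem finsum_eq_two_mul_sum_Icc {G : ℤ → ℚ} (n : ℕ) (hsupp : ∀ i : ℤ, (n : ℤ) < |i| → G i = 0)
    (heven : ∀ i, G (-i) = G i) (hzero : G 0 = 0) :
    ∑ᶠ i, G i = 2 * ∑ k ∈ Icc 1 n, G k := by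
  have hsub : Function.support G
      ⊆ ↑((Icc 1 n).image (fun k : ℕ => (k : ℤ)) ∪ (Icc 1 n).image (fun k : ℕ => -(k : ℤ))) := by
    intro i hi
    have hin : |i| ≤ n := not_lt.1 fun h => hi (hsupp i h)
    obtain ⟨k, rfl | rfl⟩ := Int.eq_nat_or_neg i
    · have : k ≠ 0 := by rintro rfl; exact hi hzero
      simp only [coe_union, coe_image, coe_Icc, Set.mem_union, Set.mem_image, Set.mem_Icc]
      left; exact ⟨k, ⟨by omega, by simpa using hin⟩, rfl⟩
    · have : k ≠ 0 := by rintro rfl; exact hi (by simpa using hzero)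
      simp only [coe_union, coe_image, coe_Icc, Set.mem_union, Set.mem_image, Set.mem_Icc]
      right; exact ⟨k, ⟨by omega, by simpa using hin⟩, rfl⟩
  rw [finsum_eq_sum_of_support_subset G hsub, sum_union, sum_image, sum_image]
  · simp only [heven]; ring
  · intro x _ y _ h; simpa using h
  · intro x _ y _ h; simpa using h
  · rw [disjoint_left]
    simp only [mem_image, mem_Icc, not_exists, not_and]
    rintro _ ⟨k, hk, rfl⟩ l hl
    omega

theorem ichoose_two_mul_add_eq_zero {n : ℕ} {i : ℤ} (hi : (n : ℤ) < |i|) :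
    ichoose (2 * n) (n + i) = 0 := by
  unfold ichoose
  split_ifs with h
  · rw [Nat.choose_eq_zero_of_lt (by rw [lt_abs] at hi; omega), Nat.cast_zero]
  · rfl

theorem ichoose_two_mul_add_neg (n : ℕ) (i : ℤ) :
    ichoose (2 * n) (n + -i) = ichoose (2 * n) (n + i) := by
  by_cases hi : (n : ℤ) < |i|
  · rw [ichoose_two_mul_add_eq_zero hi, ichoose_two_mul_add_eq_zero (by rwa [abs_neg])]
  rw [not_lt, abs_le] at hi
  unfold ichoose
  rw [if_pos (by omega), if_pos (by omega), ← Nat.choose_symm (by omega : (n + i).toNat ≤ 2 * n)]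
  congr 3
  omega

theorem ichoose_two_mul_add_natCast (n k : ℕ) : (ichoose (2 * n) (n + k) : ℚ) = c n k := by
  rw [ichoose, if_pos (by positivity), c, show ((n : ℤ) + k).toNat = n + k by omega]
  push_cast
  rfl

theorem finsum_finsum_ichoose_mul_abs (n : ℕ) :
    ∑ᶠ i : ℤ, ∑ᶠ j : ℤ, ((ichoose (2 * n) (n + i) : ℚ) * (ichoose (2 * n) (n + j) : ℚ)
        * |(i : ℚ) ^ 2 * (j : ℚ) ^ 2 * ((i : ℚ) ^ 2 - (j : ℚ) ^ 2)|)
      = 4 * ∑ i ∈ Icc 1 n, ∑ j ∈ Icc 1 n,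
        c n i * c n j * |(i : ℚ) ^ 2 * (j : ℚ) ^ 2 * ((i : ℚ) ^ 2 - (j : ℚ) ^ 2)| := by
  rw [finsum_congr fun i => finsum_eq_two_mul_sum_Icc n
    (fun j hj => by simp [ichoose_two_mul_add_eq_zero hj])
    (fun j => by simp [ichoose_two_mul_add_neg]) (by simp)]
  rw [finsum_eq_two_mul_sum_Icc n]
  · simp only [Int.cast_natCast, ichoose_two_mul_add_natCast, mul_sum]
    exact sum_congr rfl fun _ _ => sum_congr rfl fun _ _ => by ring
  · intro i hi
    simp [ichoose_two_mul_add_eq_zero hi]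
  · intro i
    simp [ichoose_two_mul_add_neg]
  · simp

end BinomAbsSum

theorem stmt18 (n : ℕ) (hn : 1 ≤ n) :
    ∑ᶠ i : ℤ, ∑ᶠ j : ℤ,
        ((ichoose (2 * n) (n + i) : ℚ) * (ichoose (2 * n) (n + j) : ℚ)
          * |(i : ℚ) ^ 2 * (j : ℚ) ^ 2 * ((i : ℚ) ^ 2 - (j : ℚ) ^ 2)|)
      = 2 * (n : ℚ) ^ 4 * ((n : ℚ) - 1) / (2 * n - 1) * ((2 * n).choose n : ℚ) ^ 2 := by
  have h2n : 2 * (n : ℚ) - 1 ≠ 0 := by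
    have : (1 : ℚ) ≤ n := by exact_mod_cast hn
    linarith
  rw [BinomAbsSum.finsum_finsum_ichoose_mul_abs, BinomAbsSum.choose_central_eq hn]
  field_simp
  linear_combination 4 * BinomAbsSum.two_mul_sub_one_mul_sum_abs hn
end
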